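/- arXiv:1002.4739 — 2 statements merged into one kernel-verified Lean document; each statement's English description precedes it below -/
import Mathlib

section
/- Every cyclically 4-edge-connected cubic bipartite graph with at least 8 vertices has the property that each of its edges is contained in at least three perfect matchings. -/
open SimpleGraph
open scoped Classical

universe u

variable {V : Type u}

/-- `M` is a perfect matching of `G`: a set of edges of `G` such that every
vertex is incident to exactly one edge of `M`. -/
def IsPM (G : SimpleGraph V) (M : Set (Sym2 V)) : Prop :=
  M ⊆ G.edgeSet ∧ ∀ v : V, ∃! e, e ∈ M ∧ v ∈ e

/-- The edge-cut `E(A, Aᶜ)`: edges of `G` with one end in `A` and one end outside. -/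
def cutEdges (G : SimpleGraph V) (A : Set V) : Set (Sym2 V) :=
  {e | e ∈ G.edgeSet ∧ ∃ x y, e = s(x, y) ∧ x ∈ A ∧ y ∉ A}

/-- The edge-cut `E(A, Aᶜ)` is cyclic: both sides induce a subgraph with a cycle. -/
def CyclicCut (G : SimpleGraph V) (A : Set V) : Prop :=
  ¬(G.induce A).IsAcyclic ∧ ¬(G.induce Aᶜ).IsAcyclic

/-- `G` has no cyclic edge-cut of size less than `k`. -/
def CyclicallyEdgeConnected (G : SimpleGraph V) (k : ℕ) : Prop :=
  ∀ A : Set V, CyclicCut G A → k ≤ (cutEdges G A).ncard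

/-- Every edge-cut of `G` has at least `k` edges. -/
def EdgeConnectedGe (G : SimpleGraph V) (k : ℕ) : Prop :=
  ∀ A : Set V, A.Nonempty → Aᶜ.Nonempty → k ≤ (cutEdges G A).ncard

/-- `G` is cubic: every vertex has degree three. -/
def CubicGraph (G : SimpleGraph V) : Prop :=
  ∀ v : V, (G.neighborSet v).ncard = 3

/-- `G` has no bridges. -/
def Bridgeless (G : SimpleGraph V) : Prop :=
  ∀ e ∈ G.edgeSet, ¬G.IsBridge e

/-- `G` is matching-covered: connected and every edge lies in a perfect matching. -/
def MatchingCovered (G : SimpleGraph V) : Prop :=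
  G.Connected ∧ ∀ e ∈ G.edgeSet, ∃ M, IsPM G M ∧ e ∈ M

/-- `M` is a matching of the subgraph of `G` induced on `A` which covers exactly the
vertices of `A \ X` (i.e. covers all vertices of `A` except those in `X`). -/
def IsNearPM (G : SimpleGraph V) (A X : Set V) (M : Set (Sym2 V)) : Prop :=
  (∀ e ∈ M, ∃ x y, e = s(x, y) ∧ G.Adj x y ∧ x ∈ A ∧ y ∈ A) ∧
  (∀ w ∈ A \ X, ∃! e, e ∈ M ∧ w ∈ e) ∧
  (∀ w ∈ X, ∀ e ∈ M, w ∉ e)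

/-- `IsTwistedNet G st c`: the subgraph of `G` induced on the vertex set `st` is a
twisted net with corner set `c`.  A 4-cycle is a twisted net whose corners are its
four vertices; and one may join a twisted net and a twisted net (multiplication), or
a twisted net and a single edge (incrementation), by two edges between corners. -/
inductive IsTwistedNet (G : SimpleGraph V) : Set V → Set V → Prop
  | cyc4 (a b c d : V) (hab : a ≠ b) (hac : a ≠ c) (had : a ≠ d)
      (hbc : b ≠ c) (hbd : b ≠ d) (hcd : c ≠ d)
      (hadj : ∀ x ∈ ({a, b, c, d} : Set V), ∀ y ∈ ({a, b, c, d} : Set V),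
        (G.Adj x y ↔ s(x, y) ∈ ({s(a, b), s(b, c), s(c, d), s(d, a)} : Set (Sym2 V)))) :
      IsTwistedNet G {a, b, c, d} {a, b, c, d}
  | incr (st c : Set V) (u u' v v' : V)
      (hprev : IsTwistedNet G st c)
      (hu : u ∈ c) (hu' : u' ∈ c) (huu' : u ≠ u')
      (hv : v ∉ st) (hv' : v' ∉ st) (hvv' : v ≠ v')
      (hvv'adj : G.Adj v v') (huv : G.Adj u v) (hu'v' : G.Adj u' v')
      (hcross : ∀ x ∈ st, (G.Adj x v ↔ x = u) ∧ (G.Adj x v' ↔ x = u')) :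
      IsTwistedNet G (st ∪ {v, v'}) ((c \ {u, u'}) ∪ {v, v'})
  | mult (st₁ c₁ st₂ c₂ : Set V) (u u' v v' : V)
      (h₁ : IsTwistedNet G st₁ c₁) (h₂ : IsTwistedNet G st₂ c₂)
      (hdisj : st₁ ∩ st₂ = ∅)
      (hu : u ∈ c₁) (hu' : u' ∈ c₁) (huu' : u ≠ u')
      (hv : v ∈ c₂) (hv' : v' ∈ c₂) (hvv' : v ≠ v')
      (huv : G.Adj u v) (hu'v' : G.Adj u' v')
      (hcross : ∀ x ∈ st₁, ∀ y ∈ st₂,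
        (G.Adj x y ↔ ((x = u ∧ y = v) ∨ (x = u' ∧ y = v')))) :
      IsTwistedNet G (st₁ ∪ st₂) ((c₁ \ {u, u'}) ∪ (c₂ \ {v, v'}))

/-- The set of (vertex sets of) semiblocks of `G`: inclusion-wise minimal sides of
2-edge-cuts. -/
def Semiblocks (G : SimpleGraph V) : Set (Set V) :=
  {A | A.Nonempty ∧ (cutEdges G A).ncard = 2 ∧
    ∀ A' ⊆ A, A'.Nonempty → (cutEdges G A').ncard = 2 → A' = A}

/-- The number of semiblocks of `G`; if `G` has no 2-edge-cut, `G` itself is its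
unique semiblock, so the number of semiblocks is `1` in this case. -/
noncomputable def numSemiblocks (G : SimpleGraph V) : ℕ :=
  max 1 (Semiblocks G).ncard

/-- The side `B` of a cyclic 4-edge-cut is solid if `G[B]` has no 2-edge-cut with at
least two vertices on each side. -/
def SolidSide (G : SimpleGraph V) (B : Set V) : Prop :=
  ¬∃ X ⊆ B, 2 ≤ X.ncard ∧ 2 ≤ (B \ X).ncard ∧
      ({e | e ∈ G.edgeSet ∧ ∃ x y, e = s(x, y) ∧ x ∈ X ∧ y ∈ B \ X}).ncard = 2

/-- The subgraph of `G` induced on `A` is a ladder (a `2 × k` grid) whose two ends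
(the edges both of whose end-vertices have degree two in the ladder) are `f₁` and `f₂`. -/
def IsLadder (G : SimpleGraph V) (A : Set V) (f₁ f₂ : Sym2 V) : Prop :=
  ∃ (k : ℕ) (x y : Fin (k + 1) → V),
    Function.Injective x ∧ Function.Injective y ∧ (∀ i j, x i ≠ y j) ∧
    A = Set.range x ∪ Set.range y ∧
    (∀ u ∈ A, ∀ v ∈ A, (G.Adj u v ↔
      ((∃ i, u = x i ∧ v = y i) ∨ (∃ i, u = y i ∧ v = x i) ∨
       (∃ i : Fin k, (u = x i.castSucc ∧ v = x i.succ) ∨ (u = x i.succ ∧ v = x i.castSucc) ∨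
         (u = y i.castSucc ∧ v = y i.succ) ∨ (u = y i.succ ∧ v = y i.castSucc))))) ∧
    f₁ = s(x 0, y 0) ∧ f₂ = s(x (Fin.last k), y (Fin.last k))

/-- The subgraph of `G` induced on `A` is a cycle of length four. -/
def Is4Cycle (G : SimpleGraph V) (A : Set V) : Prop :=
  ∃ a b c d : V, a ≠ b ∧ a ≠ c ∧ a ≠ d ∧ b ≠ c ∧ b ≠ d ∧ c ≠ d ∧
    A = {a, b, c, d} ∧
    G.Adj a b ∧ G.Adj b c ∧ G.Adj c d ∧ G.Adj d a ∧ ¬G.Adj a c ∧ ¬G.Adj b d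

/-- The graph `G_{(pq)}` obtained from `G[A]` by adding a new vertex (`Sum.inr 0`)
adjacent to `p` and `q`, a new vertex (`Sum.inr 1`) adjacent to `r` and `t`, and an
edge between the two new vertices. -/
def GExt (G : SimpleGraph V) (A : Set V) (p q r t : V) : SimpleGraph (↥A ⊕ Fin 2) :=
  SimpleGraph.fromRel (fun x y =>
    (∃ u v : A, x = Sum.inl u ∧ y = Sum.inl v ∧ G.Adj u v) ∨
    (∃ u : A, x = Sum.inr 0 ∧ y = Sum.inl u ∧ ((u : V) = p ∨ (u : V) = q)) ∨
    (∃ u : A, x = Sum.inr 1 ∧ y = Sum.inl u ∧ ((u : V) = r ∨ (u : V) = t)) ∨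
    (x = Sum.inr 0 ∧ y = Sum.inr 1))

/-- Perfect matching, as a finite edge set. -/
def IsPMF (G : SimpleGraph V) (M : Finset (Sym2 V)) : Prop :=
  (↑M : Set (Sym2 V)) ⊆ G.edgeSet ∧ ∀ v : V, ∃! e, e ∈ M ∧ v ∈ e

/-- `w` lies in the perfect matching polytope of `G`: it is a convex combination of
characteristic vectors of perfect matchings of `G`. -/
def InPMPolytope [Fintype V] [DecidableEq V] (G : SimpleGraph V) (w : Sym2 V → ℝ) : Prop :=
  ∃ μ : Finset (Sym2 V) → ℝ,
    (∀ M, 0 ≤ μ M) ∧ (∀ M, μ M ≠ 0 → IsPMF G M) ∧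
    (∑ M : Finset (Sym2 V), μ M) = 1 ∧
    ∀ e : Sym2 V, w e = ∑ M : Finset (Sym2 V), μ M * (if e ∈ M then 1 else 0)

/-!
Fix an edge `uv`. A cubic bipartite graph splits, by Hall's theorem applied three times, into
disjoint perfect matchings `p₁, p₂, p₃` with `uv ∈ p₁`. If the 2-factor `p₁ ∪ p₂` has a cycle
avoiding `u`, switching `p₁` and `p₂` on that cycle gives a new perfect matching through `uv`;
if `p₁ ∪ p₃` has one as well, the two matchings obtained in this way are distinct.

Otherwise one of these 2-factors, say `p₁ ∪ p₂`, is a Hamiltonian cycle `x₀ x₁ ⋯ x_{N-1}` with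
`uv = x₀x₁` and `N ≥ 8`, and `p₃` consists of chords. Switching `p₁` along the cycle closed by
the chord at `x₂` gives one new matching. A second one comes from a chord `x_j x_k` with `j ≥ 4`
even and `k > j`; if there is none, the chords at `x₂` and `x₃` are forced to be `x₂x_{N-1}` and
`x₃x₆`, and switching along the cycle `x₂ x₃ x₆ x₇ ⋯ x_{N-1}` gives the second matching.
-/

theorem Equiv.Perm.bijOn_pow_apply_of_forall_sameCycle {α : Type*} [Fintype α]
    {σ : Equiv.Perm α} {u : α} (h : ∀ z, σ.SameCycle u z) :
    Set.BijOn (fun i : ℕ => (σ ^ i) u) (Set.Iio (Fintype.card α)) .univ ∧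
      (σ ^ Fintype.card α) u = u := by
  simp only [← Equiv.Perm.iterate_eq_pow]
  have hpos : 0 < Function.minimalPeriod σ u :=
    Function.IsPeriodicPt.minimalPeriod_pos (orderOf_pos σ) <| by
      rw [Function.IsPeriodicPt, Function.IsFixedPt, Equiv.Perm.iterate_eq_pow,
        pow_orderOf_eq_one]
      rfl
  have hbij : Set.BijOn (fun i : ℕ => σ^[i] u) (Set.Iio (Function.minimalPeriod σ u)) .univ := by
    refine ⟨Set.mapsTo_univ _ _, Function.iterate_injOn_Iio_minimalPeriod, fun z _ => ?_⟩
    obtain ⟨i, rfl⟩ := (h z).exists_nat_pow_eq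
    exact ⟨i % _, Nat.mod_lt _ hpos, by
      simp only [Function.iterate_mod_minimalPeriod_eq, Equiv.Perm.iterate_eq_pow]⟩
  have hcard : Function.minimalPeriod σ u = Fintype.card α := by
    rw [← Set.ncard_Iio_nat (Function.minimalPeriod σ u), hbij.ncard_eq, Set.ncard_univ,
      Nat.card_eq_fintype_card]
  exact hcard ▸ ⟨hbij, Function.iterate_minimalPeriod⟩

/- The indices `0, …, N - 1` of a Hamiltonian cycle whose edges `(2k, 2k + 1)` form one perfect
matching and whose edges `(2k + 1, 2k + 2)` (indices mod `N`) form another; `τ` is a third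
perfect matching, made of chords. -/
namespace CycleIndex

def IsMatching (N : ℕ) (E : ℕ → ℕ → Prop) (g : ℕ → ℕ) : Prop :=
  ∀ t < N, g t < N ∧ g (g t) = t ∧ E t (g t)

def ChordAdj (τ : ℕ → ℕ) (s t : ℕ) : Prop :=
  t = s + 1 ∨ s = t + 1 ∨ t = τ s

structure IsChordMatching (N : ℕ) (τ : ℕ → ℕ) : Prop where
  lt : ∀ t < N, τ t < N
  involutive : ∀ t < N, τ (τ t) = t
  parity_ne : ∀ t < N, τ t % 2 ≠ t % 2
  ne_succ : ∀ t < N, t % 2 = 0 → τ t ≠ t + 1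
  ne_pred : ∀ t < N, t % 2 = 0 → 0 < t → τ t ≠ t - 1
  ne_last : τ 0 ≠ N - 1

/-- The symmetric difference of `{(2k, 2k + 1)}` with the cycle `i, i + 1, …, j, i`. -/
def arcSwap (i j t : ℕ) : ℕ :=
  if t = i then j else if t = j then i
  else if i < t ∧ t < j then (if t % 2 = 1 then t + 1 else t - 1)
  else (if t % 2 = 0 then t + 1 else t - 1)

/-- The symmetric difference of `{(2k, 2k + 1)}` with the cycle `2, 3, 6, 7, 8, …, N - 1, 2`. -/
def forcedRematch (N t : ℕ) : ℕ :=
  if t = 2 then N - 1 else if t = N - 1 then 2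
  else if t = 3 then 6 else if t = 6 then 3
  else if t < 6 then (if t % 2 = 0 then t + 1 else t - 1)
  else (if t % 2 = 1 then t + 1 else t - 1)

variable {N : ℕ} {τ : ℕ → ℕ}

theorem IsMatching.mono {E E' : ℕ → ℕ → Prop} {g : ℕ → ℕ} (hg : IsMatching N E g)
    (h : ∀ s < N, ∀ t, E s t → E' s t) : IsMatching N E' g := fun t ht =>
  ⟨(hg t ht).1, (hg t ht).2.1, h t ht _ (hg t ht).2.2⟩

theorem arcSwap_self (i j : ℕ) : arcSwap i j i = j := if_pos rfl

theorem arcSwap_zero {i j : ℕ} (hi : 0 < i) (hj : j % 2 = 1) : arcSwap i j 0 = 1 := by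
  unfold arcSwap; split_ifs <;> omega

theorem arcSwap_arcSwap {i j t : ℕ} (hi : i % 2 = 0) (hj : j % 2 = 1) (hij : i + 1 < j) :
    arcSwap i j (arcSwap i j t) = t := by
  generalize hs : arcSwap i j t = s
  unfold arcSwap at hs ⊢
  split_ifs at hs ⊢ <;> omega

theorem isMatching_arcSwap (hN : N % 2 = 0) (hτ : IsChordMatching N τ) {i : ℕ} (hiN : i < N)
    (hi : i % 2 = 0) (hiτ : i + 1 < τ i) :
    IsMatching N (ChordAdj τ) (arcSwap i (τ i)) := by
  have hτi := hτ.parity_ne i hiN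
  have hτN := hτ.lt i hiN
  have hττ := hτ.involutive i hiN
  refine fun t ht => ⟨by unfold arcSwap; split_ifs <;> omega,
    arcSwap_arcSwap hi (by omega) hiτ, ?_⟩
  unfold ChordAdj arcSwap
  split_ifs <;> subst_vars <;> omega

theorem forcedRematch_forcedRematch {t : ℕ} (hN : N % 2 = 0) (h8 : 8 ≤ N) (ht : t < N) :
    forcedRematch N (forcedRematch N t) = t := by
  generalize hs : forcedRematch N t = s
  unfold forcedRematch at hs ⊢
  split_ifs at hs ⊢ <;> omega

theorem isMatching_forcedRematch (hN : N % 2 = 0) (h8 : 8 ≤ N) (hτ : IsChordMatching N τ)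
    (hτ2 : τ 2 = N - 1) (hτ3 : τ 3 = 6) : IsMatching N (ChordAdj τ) (forcedRematch N) := by
  have hτN := hτ.involutive 2 (by omega)
  have hτ6 := hτ.involutive 3 (by omega)
  rw [hτ2] at hτN
  rw [hτ3] at hτ6
  refine fun t ht => ⟨by unfold forcedRematch; split_ifs <;> omega,
    forcedRematch_forcedRematch hN h8 ht, ?_⟩
  unfold ChordAdj forcedRematch
  split_ifs <;> subst_vars <;> omega

theorem three_lt_chord_two (h8 : 8 ≤ N) (hτ : IsChordMatching N τ) : 3 < τ 2 := by
  have := hτ.parity_ne 2 (by omega)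
  have := hτ.ne_succ 2 (by omega) rfl
  have := hτ.ne_pred 2 (by omega) rfl (by omega)
  omega

theorem chords_two_three_of_forall_chord_lt (hN : N % 2 = 0) (h8 : 8 ≤ N) (hτ : IsChordMatching N τ)
    (hback : ∀ t < N, t % 2 = 0 → 4 ≤ t → τ t < t) :
    τ 2 = N - 1 ∧ τ 3 = 6 := by
  have h4 : τ 4 = 1 := by
    have := hback 4 (by omega) rfl le_rfl
    have := hτ.parity_ne 4 (by omega)
    have := hτ.ne_pred 4 (by omega) rfl (by omega)
    omega
  have h6 : τ 6 = 3 := by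
    have := hback 6 (by omega) rfl (by omega)
    have := hτ.parity_ne 6 (by omega)
    have := hτ.ne_pred 6 (by omega) rfl (by omega)
    have h41 := hτ.involutive 4 (by omega)
    have h66 := hτ.involutive 6 (by omega)
    rw [h4] at h41
    obtain h | h : τ 6 = 1 ∨ τ 6 = 3 := by omega
    · rw [h, h41] at h66
      omega
    · exact h
  have h63 := hτ.involutive 6 (by omega)
  rw [h6] at h63
  refine ⟨?_, h63⟩
  have hjN := hτ.lt (N - 1) (by omega)
  have hjj := hτ.involutive (N - 1) (by omega)
  have := hτ.parity_ne (N - 1) (by omega)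
  have hj0 : τ (N - 1) ≠ 0 := fun h => hτ.ne_last (h ▸ hjj)
  have hj4 : ¬ 4 ≤ τ (N - 1) := fun h => by
    have := hback _ hjN (by omega) h
    omega
  rw [show τ (N - 1) = 2 by omega] at hjj
  exact hjj

theorem exists_second_rematching (hN : N % 2 = 0) (h8 : 8 ≤ N) (hτ : IsChordMatching N τ) :
    ∃ h, IsMatching N (ChordAdj τ) h ∧ h 0 = 1 ∧
      ∃ t < N, t % 2 = 0 ∧ h t ≠ t + 1 ∧ h t ≠ arcSwap 2 (τ 2) t := by
  have h2 := three_lt_chord_two h8 hτ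
  by_cases hfwd : ∃ j < N, j % 2 = 0 ∧ 4 ≤ j ∧ j < τ j
  · obtain ⟨j, hjN, hj, hj4, hjτ⟩ := hfwd
    have := hτ.parity_ne j hjN
    have := hτ.ne_succ j hjN hj
    refine ⟨arcSwap j (τ j), isMatching_arcSwap hN hτ hjN hj (by omega),
      arcSwap_zero (by omega) (by omega), j, hjN, hj, ?_⟩
    have := hτ.parity_ne 2 (by omega)
    unfold arcSwap; split_ifs <;> omega
  · push Not at hfwd
    obtain ⟨hτ2, hτ3⟩ := chords_two_three_of_forall_chord_lt hN h8 hτ fun t ht he h4 => by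
      have := hfwd t ht he h4
      have := hτ.parity_ne t ht
      omega
    refine ⟨forcedRematch N, isMatching_forcedRematch hN h8 hτ hτ2 hτ3,
      by rw [forcedRematch, if_neg (by omega), if_neg (by omega)]; rfl, 6, by omega, rfl, ?_⟩
    rw [hτ2]
    unfold forcedRematch arcSwap; split_ifs <;> omega

end CycleIndex

namespace SimpleGraph

/-- The perfect matching `{s(z, p z)}` of `G`, encoded by the partner map `p`. -/
def IsPerfectMatchingFun (G : SimpleGraph V) (p : V → V) : Prop :=
  Function.Involutive p ∧ ∀ z, G.Adj z (p z)

def edgesOf (p : V → V) : Set (Sym2 V) := Set.range fun z => s(z, p z)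

variable {G : SimpleGraph V} {p q r : V → V} {C : Set V}

theorem mk_mem_edgesOf_iff (hp : Function.Involutive p) {a b : V} :
    s(a, b) ∈ edgesOf p ↔ p a = b := by
  refine ⟨?_, fun h => ⟨a, h ▸ rfl⟩⟩
  rintro ⟨z, hz⟩
  rcases Sym2.eq_iff.mp hz with ⟨rfl, rfl⟩ | ⟨rfl, rfl⟩
  exacts [rfl, hp z]

theorem eq_of_edgesOf_eq (hq : Function.Involutive q) (h : edgesOf p = edgesOf q) : p = q :=
  funext fun z => ((mk_mem_edgesOf_iff hq).mp (h ▸ ⟨z, rfl⟩)).symm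

theorem IsPerfectMatchingFun.isPM (hp : G.IsPerfectMatchingFun p) : IsPM G (edgesOf p) := by
  refine ⟨?_, fun v => ⟨s(v, p v), ⟨⟨v, rfl⟩, Sym2.mem_mk_left _ _⟩, ?_⟩⟩
  · rintro _ ⟨z, rfl⟩
    exact hp.2 z
  · rintro _ ⟨⟨z, rfl⟩, hv⟩
    rcases Sym2.mem_iff.mp hv with rfl | rfl
    · rfl
    · rw [hp.1 z, Sym2.eq_swap]

theorem three_le_ncard_isPM_mem [Finite V] {u v : V} (hp : G.IsPerfectMatchingFun p)
    (hq : G.IsPerfectMatchingFun q) (hr : G.IsPerfectMatchingFun r)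
    (hpu : p u = v) (hqu : q u = v) (hru : r u = v) (hpq : p ≠ q) (hpr : p ≠ r) (hqr : q ≠ r) :
    3 ≤ {M : Set (Sym2 V) | IsPM G M ∧ s(u, v) ∈ M}.ncard := by
  have hne : ∀ {f g : V → V}, G.IsPerfectMatchingFun g → f ≠ g → edgesOf f ≠ edgesOf g :=
    fun hg hfg h => hfg (eq_of_edgesOf_eq hg.1 h)
  have hsub : {edgesOf p, edgesOf q, edgesOf r} ⊆ {M | IsPM G M ∧ s(u, v) ∈ M} := by
    rintro M (rfl | rfl | rfl)
    exacts [⟨hp.isPM, ⟨u, hpu ▸ rfl⟩⟩, ⟨hq.isPM, ⟨u, hqu ▸ rfl⟩⟩, ⟨hr.isPM, ⟨u, hru ▸ rfl⟩⟩]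
  calc 3 = ({edgesOf p, edgesOf q, edgesOf r} : Set (Set (Sym2 V))).ncard :=
        (Set.ncard_eq_three.mpr ⟨_, _, _, hne hq hpq, hne hr hpr, hne hr hqr, rfl⟩).symm
    _ ≤ _ := Set.ncard_le_ncard hsub (Set.toFinite _)

theorem IsPerfectMatchingFun.mono {H : SimpleGraph V} (hp : G.IsPerfectMatchingFun p)
    (hGH : G ≤ H) : H.IsPerfectMatchingFun p :=
  ⟨hp.1, fun z => hGH (hp.2 z)⟩

theorem IsPerfectMatchingFun.piecewise (hp : G.IsPerfectMatchingFun p)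
    (hq : G.IsPerfectMatchingFun q) {S : Set V} (hpS : ∀ z, p z ∈ S ↔ z ∈ S)
    (hqS : ∀ z, q z ∈ S ↔ z ∈ S) : G.IsPerfectMatchingFun (S.piecewise q p) := by
  refine ⟨fun z => ?_, fun z => ?_⟩
  · by_cases hz : z ∈ S
    · rw [Set.piecewise_eq_of_mem _ _ _ hz, Set.piecewise_eq_of_mem _ _ _ ((hqS z).mpr hz), hq.1]
    · rw [Set.piecewise_eq_of_notMem _ _ _ hz,
        Set.piecewise_eq_of_notMem _ _ _ (mt (hpS z).mp hz), hp.1]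
  · by_cases hz : z ∈ S
    · rw [Set.piecewise_eq_of_mem _ _ _ hz]; exact hq.2 z
    · rw [Set.piecewise_eq_of_notMem _ _ _ hz]; exact hp.2 z

theorem ncard_le_ncard_iUnion_neighborSet [Finite V] {k : ℕ}
    (hreg : ∀ v, (G.neighborSet v).ncard = k) (hk : 0 < k) (s : Set V) :
    s.ncard ≤ (⋃ x ∈ s, G.neighborSet x).ncard := by
  have := Fintype.ofFinite V
  set T := ⋃ x ∈ s, G.neighborSet x
  have key := Finset.card_mul_le_card_mul (r := G.Adj) (s := s.toFinset) (t := T.toFinset)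
    (m := k) (n := k) (fun a ha => ?_) (fun b _ => ?_)
  · rw [Set.ncard_eq_toFinset_card', Set.ncard_eq_toFinset_card']
    exact Nat.le_of_mul_le_mul_right key hk
  · rw [← hreg a, ← Set.ncard_coe_finset]
    refine Set.ncard_le_ncard (fun b hb => ?_)
    simpa using ⟨Set.mem_biUnion (Set.mem_toFinset.mp ha) hb, hb⟩
  · rw [← hreg b, ← Set.ncard_coe_finset]
    exact Set.ncard_le_ncard fun a ha => ((Finset.mem_bipartiteBelow G.Adj).mp ha).2.symm

theorem exists_isPerfectMatchingFun_of_regular [Finite V] {k : ℕ} {s t : Set V}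
    (hreg : ∀ v, (G.neighborSet v).ncard = k) (hk : 0 < k) (hbip : G.IsBipartiteWith s t) :
    ∃ p, G.IsPerfectMatchingFun p := by
  have := Fintype.ofFinite V
  obtain ⟨M, hM⟩ := exists_isPerfectMatching_of_forall_ncard_le hbip
    (ncard_le_ncard_iUnion_neighborSet hreg hk)
  choose p hp hpu using Subgraph.isPerfectMatching_iff.mp hM
  exact ⟨p, fun z => (hpu _ z (hp z).symm).symm, fun z => M.adj_sub (hp z)⟩

theorem ncard_neighborSet_deleteEdges_edgesOf {k : ℕ}
    (hreg : ∀ v, (G.neighborSet v).ncard = k + 1) (hp : G.IsPerfectMatchingFun p) (v : V) :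
    ((G.deleteEdges (edgesOf p)).neighborSet v).ncard = k := by
  have : (G.deleteEdges (edgesOf p)).neighborSet v = G.neighborSet v \ {p v} := by
    ext b
    simp [mk_mem_edgesOf_iff hp.1, eq_comm]
  rw [this, Set.ncard_sdiff_singleton_of_mem (s := G.neighborSet v) (hp.2 v), hreg,
    Nat.add_sub_cancel]

theorem IsBipartiteWith.deleteEdges {s t : Set V} (h : G.IsBipartiteWith s t) (E : Set (Sym2 V)) :
    (G.deleteEdges E).IsBipartiteWith s t :=
  ⟨h.disjoint, fun _ _ hvw => h.mem_of_adj hvw.1⟩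

theorem exists_three_isPerfectMatchingFun [Finite V] {s t : Set V}
    (hreg : ∀ v, (G.neighborSet v).ncard = 3) (hbip : G.IsBipartiteWith s t) :
    ∃ p₁ p₂ p₃ : V → V, G.IsPerfectMatchingFun p₁ ∧ G.IsPerfectMatchingFun p₂ ∧
      G.IsPerfectMatchingFun p₃ ∧ ∀ z, p₁ z ≠ p₂ z ∧ p₁ z ≠ p₃ z ∧ p₂ z ≠ p₃ z := by
  obtain ⟨p₁, h₁⟩ := exists_isPerfectMatchingFun_of_regular hreg three_pos hbip
  have hreg₁ := ncard_neighborSet_deleteEdges_edgesOf (k := 2) hreg h₁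
  obtain ⟨p₂, h₂⟩ := exists_isPerfectMatchingFun_of_regular hreg₁ two_pos (hbip.deleteEdges _)
  have hreg₂ := ncard_neighborSet_deleteEdges_edgesOf (k := 1) hreg₁ h₂
  obtain ⟨p₃, h₃⟩ :=
    exists_isPerfectMatchingFun_of_regular hreg₂ one_pos ((hbip.deleteEdges _).deleteEdges _)
  have h₂' := h₂.2
  have h₃' := h₃.2
  simp only [deleteEdges_adj, mk_mem_edgesOf_iff h₁.1, mk_mem_edgesOf_iff h₂.1] at h₂' h₃'
  exact ⟨p₁, p₂, p₃, h₁, h₂.mono (deleteEdges_le _),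
    h₃.mono ((deleteEdges_le _).trans (deleteEdges_le _)),
    fun z => ⟨(h₂' z).2, (h₃' z).1.2, (h₃' z).2⟩⟩

theorem exists_three_isPerfectMatchingFun_of_adj [Finite V] {s t : Set V}
    (hreg : ∀ v, (G.neighborSet v).ncard = 3) (hbip : G.IsBipartiteWith s t) {u v : V}
    (huv : G.Adj u v) :
    ∃ p₁ p₂ p₃ : V → V, G.IsPerfectMatchingFun p₁ ∧ G.IsPerfectMatchingFun p₂ ∧
      G.IsPerfectMatchingFun p₃ ∧ (∀ z, p₁ z ≠ p₂ z ∧ p₁ z ≠ p₃ z ∧ p₂ z ≠ p₃ z) ∧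
      p₁ u = v := by
  obtain ⟨p₁, p₂, p₃, h₁, h₂, h₃, hne⟩ := exists_three_isPerfectMatchingFun hreg hbip
  obtain ⟨h₁₂, h₁₃, h₂₃⟩ := hne u
  have hsub : {p₁ u, p₂ u, p₃ u} ⊆ G.neighborSet u := by
    rintro _ (rfl | rfl | rfl)
    exacts [h₁.2 u, h₂.2 u, h₃.2 u]
  have heq := Set.eq_of_subset_of_ncard_le hsub
    (by rw [hreg, Set.ncard_eq_three.mpr ⟨_, _, _, h₁₂, h₁₃, h₂₃, rfl⟩])
    (Set.finite_of_ncard_pos (by rw [hreg]; norm_num))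
  have hv : v ∈ ({p₁ u, p₂ u, p₃ u} : Set V) := heq ▸ huv
  rcases hv with rfl | rfl | rfl
  · exact ⟨p₁, p₂, p₃, h₁, h₂, h₃, hne, rfl⟩
  · exact ⟨p₂, p₁, p₃, h₂, h₁, h₃, fun z => ⟨(hne z).1.symm, (hne z).2.2, (hne z).2.1⟩, rfl⟩
  · exact ⟨p₃, p₁, p₂, h₃, h₁, h₂,
      fun z => ⟨(hne z).2.1.symm, (hne z).2.2.symm, (hne z).1⟩, rfl⟩

theorem isBipartiteWith_compl_of_forall_adj
    (h : ∀ x y, G.Adj x y → (x ∈ C ↔ y ∉ C)) : G.IsBipartiteWith C Cᶜ := by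
  refine ⟨disjoint_compl_right, fun x y hxy => ?_⟩
  have := h x y hxy
  by_cases hx : x ∈ C <;> simp_all

theorem IsBipartiteWith.mem_iff_notMem_of_adj (hC : G.IsBipartiteWith C Cᶜ) {x y : V}
    (hxy : G.Adj x y) : y ∈ C ↔ x ∉ C := by
  rcases hC.mem_of_adj hxy with ⟨hx, hy⟩ | ⟨hx, hy⟩ <;> simp_all

theorem IsBipartiteWith.mem_iff_even (hC : G.IsBipartiteWith C Cᶜ) {x : ℕ → V}
    (hx : ∀ i, G.Adj (x i) (x (i + 1))) (h0 : x 0 ∈ C) (i : ℕ) : x i ∈ C ↔ i % 2 = 0 := by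
  induction i with
  | zero => simpa using h0
  | succ i ih => rw [hC.mem_iff_notMem_of_adj (hx i), ih]; omega

/-- Follows `p` from `C` and `q` from `Cᶜ`; its cycles are the alternating cycles of the
2-factor `p ∪ q`. -/
noncomputable def alternatingPerm (hC : G.IsBipartiteWith C Cᶜ) (hp : G.IsPerfectMatchingFun p)
    (hq : G.IsPerfectMatchingFun q) : Equiv.Perm V where
  toFun := C.piecewise p q
  invFun := C.piecewise q p
  left_inv z := by
    by_cases hz : z ∈ C
    · have := (hC.mem_iff_notMem_of_adj (hp.2 z)).not.mpr (not_not.mpr hz)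
      simp [hz, this, hp.1 z]
    · have := (hC.mem_iff_notMem_of_adj (hq.2 z)).mpr hz
      simp [hz, this, hq.1 z]
  right_inv z := by
    by_cases hz : z ∈ C
    · have := (hC.mem_iff_notMem_of_adj (hq.2 z)).not.mpr (not_not.mpr hz)
      simp [hz, this, hq.1 z]
    · have := (hC.mem_iff_notMem_of_adj (hp.2 z)).mpr hz
      simp [hz, this, hp.1 z]

section alternatingPerm

variable (hC : G.IsBipartiteWith C Cᶜ) (hp : G.IsPerfectMatchingFun p)
  (hq : G.IsPerfectMatchingFun q)

theorem alternatingPerm_apply (z : V) : alternatingPerm hC hp hq z = C.piecewise p q z := rfl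

theorem adj_alternatingPerm (z : V) : G.Adj z (alternatingPerm hC hp hq z) := by
  by_cases hz : z ∈ C
  · rw [alternatingPerm_apply, Set.piecewise_eq_of_mem _ _ _ hz]; exact hp.2 z
  · rw [alternatingPerm_apply, Set.piecewise_eq_of_notMem _ _ _ hz]; exact hq.2 z

theorem alternatingPerm_eq_or_alternatingPerm_eq {f : V → V} (hf : f = p ∨ f = q) (z : V) :
    alternatingPerm hC hp hq z = f z ∨ alternatingPerm hC hp hq (f z) = z := by
  have hf' : G.IsPerfectMatchingFun f := by rcases hf with rfl | rfl <;> assumption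
  have hfz := hC.mem_iff_notMem_of_adj (hf'.2 z)
  rcases hf with rfl | rfl <;> by_cases hz : z ∈ C
  · exact .inl (Set.piecewise_eq_of_mem _ _ _ hz)
  · exact .inr (by rw [alternatingPerm_apply, Set.piecewise_eq_of_mem _ _ _ (hfz.mpr hz), hp.1])
  · exact .inr (by
      rw [alternatingPerm_apply, Set.piecewise_eq_of_notMem _ _ _ (hfz.not_left.mpr hz), hq.1])
  · exact .inl (Set.piecewise_eq_of_notMem _ _ _ hz)

theorem sameCycle_alternatingPerm_iff {f : V → V} (hf : f = p ∨ f = q) {w z : V} :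
    (alternatingPerm hC hp hq).SameCycle w (f z) ↔ (alternatingPerm hC hp hq).SameCycle w z := by
  rcases alternatingPerm_eq_or_alternatingPerm_eq hC hp hq hf z with h | h
  · rw [← h, Equiv.Perm.sameCycle_apply_right]
  · rw [← Equiv.Perm.sameCycle_apply_right, h]

theorem exists_isPerfectMatchingFun_of_not_sameCycle {u w : V}
    (hw : ¬ (alternatingPerm hC hp hq).SameCycle w u) :
    ∃ f, G.IsPerfectMatchingFun f ∧ f u = p u ∧ f w = q w ∧ ∀ z, f z = p z ∨ f z = q z := by
  set S := {z | (alternatingPerm hC hp hq).SameCycle w z}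
  refine ⟨S.piecewise q p, hp.piecewise hq (fun z => sameCycle_alternatingPerm_iff hC hp hq
    (.inl rfl)) (fun z => sameCycle_alternatingPerm_iff hC hp hq (.inr rfl)),
    Set.piecewise_eq_of_notMem _ _ _ hw, Set.piecewise_eq_of_mem _ _ _ (.refl _ _), fun z => ?_⟩
  by_cases hz : z ∈ S
  · exact .inr (Set.piecewise_eq_of_mem _ _ _ hz)
  · exact .inl (Set.piecewise_eq_of_notMem _ _ _ hz)

end alternatingPerm

structure IsAlternatingHamiltonianCycle (p q : V → V) (N : ℕ) (x : ℕ → V) : Prop where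
  bijOn : Set.BijOn x (Set.Iio N) .univ
  even : N % 2 = 0
  succ_of_even : ∀ i, i % 2 = 0 → x (i + 1) = p (x i)
  succ_of_odd : ∀ i, i % 2 = 1 → x (i + 1) = q (x i)
  periodic : x N = x 0

theorem isAlternatingHamiltonianCycle_of_forall_sameCycle [Fintype V]
    (hC : G.IsBipartiteWith C Cᶜ) (hp : G.IsPerfectMatchingFun p) (hq : G.IsPerfectMatchingFun q)
    {u : V} (hu : u ∈ C) (h : ∀ z, (alternatingPerm hC hp hq).SameCycle u z) :
    IsAlternatingHamiltonianCycle p q (Fintype.card V)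
      (fun i => (alternatingPerm hC hp hq ^ i) u) := by
  set σ := alternatingPerm hC hp hq
  obtain ⟨hbij, hper⟩ := Equiv.Perm.bijOn_pow_apply_of_forall_sameCycle h
  have hsucc : ∀ i, (σ ^ (i + 1)) u = σ ((σ ^ i) u) := fun i => by
    rw [pow_succ', Equiv.Perm.mul_apply]
  have hmem := hC.mem_iff_even (x := fun i => (σ ^ i) u)
    (fun i => hsucc i ▸ adj_alternatingPerm hC hp hq _) hu
  refine ⟨hbij, (hmem _).mp (by simpa only [hper] using hu), fun i hi => ?_, fun i hi => ?_, hper⟩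
  · rw [hsucc, alternatingPerm_apply, Set.piecewise_eq_of_mem _ _ _ ((hmem i).mpr hi)]
  · rw [hsucc, alternatingPerm_apply, Set.piecewise_eq_of_notMem _ _ _ (by rw [hmem]; omega)]

theorem exists_isPerfectMatchingFun_of_isMatching {N : ℕ} {x : ℕ → V}
    (hx : Set.BijOn x (Set.Iio N) .univ) {g : ℕ → ℕ}
    (hg : CycleIndex.IsMatching N (fun s t => G.Adj (x s) (x t)) g) :
    ∃ f, G.IsPerfectMatchingFun f ∧ ∀ t < N, f (x t) = x (g t) := by
  set idx := Function.invFunOn x (Set.Iio N)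
  have hidx : ∀ z, idx z < N := fun z => hx.surjOn.mapsTo_invFunOn (Set.mem_univ z)
  have hx_idx : ∀ z, x (idx z) = z := fun z => hx.invOn_invFunOn.2 (Set.mem_univ z)
  have hidx_x : ∀ t < N, idx (x t) = t := fun t ht => hx.invOn_invFunOn.1 ht
  refine ⟨fun z => x (g (idx z)), ⟨fun z => ?_, fun z => ?_⟩,
    fun t ht => congrArg (x ∘ g) (hidx_x t ht)⟩
  · obtain ⟨hgN, hgg, -⟩ := hg _ (hidx z)
    simp only [hidx_x _ hgN, hgg, hx_idx]
  · simpa [hx_idx] using (hg _ (hidx z)).2.2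

namespace IsAlternatingHamiltonianCycle

variable {N : ℕ} {x : ℕ → V} (hx : IsAlternatingHamiltonianCycle p q N x)
  (hp : G.IsPerfectMatchingFun p) (hq : G.IsPerfectMatchingFun q)
include hx hp hq

theorem adj_succ (i : ℕ) : G.Adj (x i) (x (i + 1)) := by
  rcases Nat.mod_two_eq_zero_or_one i with h | h
  · rw [hx.succ_of_even i h]; exact hp.2 _
  · rw [hx.succ_of_odd i h]; exact hq.2 _

theorem isChordMatching (hC : G.IsBipartiteWith C Cᶜ) (hx0 : x 0 ∈ C)
    (hr : G.IsPerfectMatchingFun r) (hpr : ∀ z, p z ≠ r z) (hqr : ∀ z, q z ≠ r z) :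
    CycleIndex.IsChordMatching N (fun t => Function.invFunOn x (Set.Iio N) (r (x t))) := by
  have hidx : ∀ z, Function.invFunOn x (Set.Iio N) z < N :=
    fun z => hx.bijOn.surjOn.mapsTo_invFunOn (Set.mem_univ z)
  have hx_idx : ∀ z, x (Function.invFunOn x (Set.Iio N) z) = z :=
    fun z => hx.bijOn.invOn_invFunOn.2 (Set.mem_univ z)
  have hmem := hC.mem_iff_even (hx.adj_succ hp hq) hx0
  have hpred : ∀ t, 0 < t → t % 2 = 0 → q (x t) = x (t - 1) := fun t ht he => by
    obtain ⟨s, rfl⟩ : ∃ s, t = s + 1 := ⟨t - 1, by omega⟩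
    rw [hx.succ_of_odd s (by omega), hq.1, Nat.add_sub_cancel]
  refine ⟨fun t _ => hidx _, fun t ht => ?_, fun t _ => ?_, fun t _ he h => ?_,
    fun t _ he ht h => ?_, fun h => ?_⟩
  · simp only [hx_idx, hr.1 _]
    exact hx.bijOn.invOn_invFunOn.1 ht
  · have := hC.mem_iff_notMem_of_adj (hr.2 (x t))
    rw [← hx_idx (r (x t)), hmem, hmem] at this
    omega
  · exact hpr (x t) (by rw [← hx.succ_of_even t he, ← h, hx_idx])
  · exact hqr (x t) (by rw [hpred t ht he, ← h, hx_idx])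
  · obtain ⟨i, hi, -⟩ := hx.bijOn.surjOn (Set.mem_univ (x 0))
    have hq0 : q (x 0) = x (N - 1) := hx.periodic ▸ hpred N (by simp at hi; omega) hx.even
    exact hqr (x 0) (by rw [hq0, ← h, hx_idx])

theorem exists_two_other_isPerfectMatchingFun (h8 : 8 ≤ N) (hC : G.IsBipartiteWith C Cᶜ)
    (hx0 : x 0 ∈ C) (hr : G.IsPerfectMatchingFun r) (hpr : ∀ z, p z ≠ r z)
    (hqr : ∀ z, q z ≠ r z) :
    ∃ f g : V → V, G.IsPerfectMatchingFun f ∧ G.IsPerfectMatchingFun g ∧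
      f (x 0) = p (x 0) ∧ g (x 0) = p (x 0) ∧ f ≠ p ∧ g ≠ p ∧ f ≠ g := by
  set τ := fun t => Function.invFunOn x (Set.Iio N) (r (x t))
  have hτ : CycleIndex.IsChordMatching N τ := hx.isChordMatching hp hq hC hx0 hr hpr hqr
  have hadj : ∀ s < N, ∀ t, CycleIndex.ChordAdj τ s t → G.Adj (x s) (x t) := by
    rintro s - t (rfl | rfl | rfl)
    · exact hx.adj_succ hp hq s
    · exact (hx.adj_succ hp hq t).symm
    · rw [hx.bijOn.invOn_invFunOn.2 (Set.mem_univ _)]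
      exact hr.2 _
  have h3 := CycleIndex.three_lt_chord_two h8 hτ
  have hτ2 := hτ.parity_ne 2 (by omega)
  have hg₁ := CycleIndex.isMatching_arcSwap (i := 2) hx.even hτ (by omega) rfl (by omega)
  obtain ⟨f, hf, hfx⟩ := exists_isPerfectMatchingFun_of_isMatching hx.bijOn (hg₁.mono hadj)
  obtain ⟨h, hh, h0, t, ht, hte, hne₁, hne₂⟩ :=
    CycleIndex.exists_second_rematching hx.even h8 hτ
  obtain ⟨g, hg, hgx⟩ := exists_isPerfectMatchingFun_of_isMatching hx.bijOn (hh.mono hadj)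
  have hinj : ∀ a b, a < N → b < N → a ≠ b → x a ≠ x b :=
    fun a b ha hb hab => hx.bijOn.injOn.ne ha hb hab
  have htN : t + 1 < N := by have := hx.even; omega
  have hp0 : p (x 0) = x 1 := (hx.succ_of_even 0 rfl).symm
  refine ⟨f, g, hf, hg, ?_, ?_, fun hfp => ?_, fun hgp => ?_, fun hfg => ?_⟩
  · rw [hfx 0 (by omega), CycleIndex.arcSwap_zero two_pos (by omega), hp0]
  · rw [hgx 0 (by omega), h0, hp0]
  · have := congrFun hfp (x 2)
    rw [hfx 2 (by omega), CycleIndex.arcSwap_self, ← hx.succ_of_even 2 rfl] at this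
    exact hinj _ _ (hτ.lt 2 (by omega)) (by omega) (by omega) this
  · have := congrFun hgp (x t)
    rw [hgx t ht, ← hx.succ_of_even t hte] at this
    exact hinj _ _ (hh t ht).1 htN hne₁ this
  · have := congrFun hfg (x t)
    rw [hfx t ht, hgx t ht] at this
    exact hinj _ _ (hh t ht).1 (hg₁ t ht).1 hne₂ this.symm

end IsAlternatingHamiltonianCycle

theorem exists_two_other_isPerfectMatchingFun_of_oneFactorization [Fintype V]
    (hC : G.IsBipartiteWith C Cᶜ) (h8 : 8 ≤ Fintype.card V) {p₁ p₂ p₃ : V → V}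
    (h₁ : G.IsPerfectMatchingFun p₁) (h₂ : G.IsPerfectMatchingFun p₂)
    (h₃ : G.IsPerfectMatchingFun p₃)
    (hne : ∀ z, p₁ z ≠ p₂ z ∧ p₁ z ≠ p₃ z ∧ p₂ z ≠ p₃ z) {u : V} (hu : u ∈ C) :
    ∃ f g : V → V, G.IsPerfectMatchingFun f ∧ G.IsPerfectMatchingFun g ∧
      f u = p₁ u ∧ g u = p₁ u ∧ f ≠ p₁ ∧ g ≠ p₁ ∧ f ≠ g := by
  by_cases hham₂ : ∀ z, (alternatingPerm hC h₁ h₂).SameCycle u z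
  · simpa using (isAlternatingHamiltonianCycle_of_forall_sameCycle hC h₁ h₂ hu hham₂
      ).exists_two_other_isPerfectMatchingFun h₁ h₂ h8 hC (by simpa) h₃ (fun z => (hne z).2.1)
      (fun z => (hne z).2.2)
  by_cases hham₃ : ∀ z, (alternatingPerm hC h₁ h₃).SameCycle u z
  · simpa using (isAlternatingHamiltonianCycle_of_forall_sameCycle hC h₁ h₃ hu hham₃
      ).exists_two_other_isPerfectMatchingFun h₁ h₃ h8 hC (by simpa) h₂ (fun z => (hne z).1)
      (fun z => (hne z).2.2.symm)
  push Not at hham₂ hham₃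
  obtain ⟨w₂, hw₂⟩ := hham₂
  obtain ⟨w₃, hw₃⟩ := hham₃
  obtain ⟨f, hf, hfu, hfw, -⟩ :=
    exists_isPerfectMatchingFun_of_not_sameCycle hC h₁ h₂ (mt .symm hw₂)
  obtain ⟨g, hg, hgu, hgw, hg₁₃⟩ :=
    exists_isPerfectMatchingFun_of_not_sameCycle hC h₁ h₃ (mt .symm hw₃)
  refine ⟨f, g, hf, hg, hfu, hgu, fun h => (hne w₂).1 (h ▸ hfw),
    fun h => (hne w₃).2.1 (h ▸ hgw), fun h => ?_⟩
  rcases hg₁₃ w₂ with h' | h' <;> rw [← h, hfw] at h'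
  exacts [(hne w₂).1 h'.symm, (hne w₂).2.2 h']

end SimpleGraph

theorem cyclically4_bipartite_triple_covered_general
    [Fintype V] (G : SimpleGraph V) (hcubic : CubicGraph G)
    (hbip : ∃ C : Set V, ∀ x y, G.Adj x y → (x ∈ C ↔ y ∉ C))
    (hcard : 8 ≤ Fintype.card V) :
    ∀ e ∈ G.edgeSet, 3 ≤ {M : Set (Sym2 V) | IsPM G M ∧ e ∈ M}.ncard := by
  intro e he
  induction e using Sym2.ind with | _ u v => ?_
  obtain ⟨C, hC, hu⟩ : ∃ C : Set V, G.IsBipartiteWith C Cᶜ ∧ u ∈ C := by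
    obtain ⟨C, hC⟩ := hbip
    by_cases hu : u ∈ C
    · exact ⟨C, isBipartiteWith_compl_of_forall_adj hC, hu⟩
    · exact ⟨Cᶜ, by simpa using (isBipartiteWith_compl_of_forall_adj hC).symm, hu⟩
  obtain ⟨p₁, p₂, p₃, h₁, h₂, h₃, hne, huv⟩ :=
    exists_three_isPerfectMatchingFun_of_adj hcubic hC he
  obtain ⟨f, g, hf, hg, hfu, hgu, hfp, hgp, hfg⟩ :=
    exists_two_other_isPerfectMatchingFun_of_oneFactorization hC hcard h₁ h₂ h₃ hne hu
  exact three_le_ncard_isPM_mem h₁ hf hg huv (hfu.trans huv) (hgu.trans huv) (Ne.symm hfp)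
    (Ne.symm hgp) hfg

/-- In a cyclically 4-edge-connected cubic bipartite graph with at least 8 vertices,
every edge is contained in at least three perfect matchings. -/
theorem cyclically4_bipartite_triple_covered
    [Fintype V] (G : SimpleGraph V) (hcubic : CubicGraph G)
    (hC4 : CyclicallyEdgeConnected G 4)
    (hbip : ∃ C : Set V, ∀ x y, G.Adj x y → (x ∈ C ↔ y ∉ C))
    (hcard : 8 ≤ Fintype.card V) :
    ∀ e ∈ G.edgeSet, 3 ≤ {M : Set (Sym2 V) | IsPM G M ∧ e ∈ M}.ncard :=
  cyclically4_bipartite_triple_covered_general G hcubic hbip hcard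
end

section
/- Every twisted net with n vertices has at least 2^(n/18 + 2/3) perfect matchings. -/
open SimpleGraph
open scoped Classical

universe u

variable {V : Type u}

/-!
Write `p` for the number of perfect matchings of a twisted net on `n` vertices and `ν(X)` for
the number of perfect matchings of the net with the set `X` of corners deleted, and let
`f(x) = 2 ^ ((x + 12) / 18)`, so that the theorem says `f(n) ≤ p`. Induction along the
construction proves more: for every family `T` of pairs of corners, the weight
`p + ∑_{P ∈ T} ν(P)` is at least `f(n + 2|T|)` if the pairs of `T` pairwise meet, at least
`f(n + 2|T| - 2)` if `T` is nonempty, and at least `f(n + 2|T|) - ν(P ∪ Q)` if `P, Q ∈ T` are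
disjoint.

For a 4-cycle this is a finite check. Joining two nets multiplies matching counts, and
`f(n₁) f(n₂) = f(n₁ + n₂ + 12)` leaves slack for the at most six pairs of four corners. Attaching
an edge `vv'` to corners `u, u'` gives `p' ≥ p + ν({u, u'})`, since a new perfect matching uses
either `vv'` or both `uv` and `u'v'`; renaming `v ↦ u'`, `v' ↦ u` turns a family `T` of new
corner pairs into the family `T ∪ {{u, u'}}` of old ones, which is one pair larger and whose
weight is at most the new weight.
-/

noncomputable def netBound (x : ℝ) : ℝ := (2 : ℝ) ^ ((x + 12) / 18)

lemma netBound_pos (x : ℝ) : 0 < netBound x := Real.rpow_pos_of_pos two_pos _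

lemma netBound_mono : Monotone netBound := fun _ _ h =>
  Real.rpow_le_rpow_of_exponent_le one_le_two (by linarith)

lemma netBound_add_eighteen (x : ℝ) : netBound (x + 18) = 2 * netBound x := by
  rw [netBound, netBound, show (x + 18 + 12) / 18 = 1 + (x + 12) / 18 by ring,
    Real.rpow_add two_pos, Real.rpow_one]

lemma netBound_mul (x y : ℝ) : netBound x * netBound y = netBound (x + y + 12) := by
  rw [netBound, netBound, netBound, ← Real.rpow_add two_pos]
  ring_nf

lemma netBound_six : netBound 6 = 2 := by norm_num [netBound]

lemma netBound_eight_le : netBound 8 ≤ 3 := by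
  have h : netBound 8 ^ 9 = 2 ^ 10 := by
    rw [netBound, ← Real.rpow_natCast, ← Real.rpow_mul zero_le_two]
    norm_num
  exact le_of_pow_le_pow_left₀ (n := 9) (by norm_num) (by norm_num) (by rw [h]; norm_num)

lemma netBound_twentyFour : netBound 24 = 4 := by
  rw [netBound, show ((24 : ℝ) + 12) / 18 = (2 : ℕ) by norm_num, Real.rpow_natCast]
  norm_num

lemma netBound_two_mul_le {k : ℕ} {w : ℝ} (hk : k ≤ 12) (hw : 2 ≤ w) (hkw : (k : ℝ) - 1 ≤ w) :
    netBound (2 * k) ≤ w := by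
  rcases le_or_gt k 3 with h3 | h3
  · refine (netBound_mono ?_).trans (netBound_six.trans_le hw)
    exact_mod_cast (by omega : 2 * k ≤ 6)
  rcases eq_or_lt_of_le (show 4 ≤ k by omega) with rfl | h5
  · refine (netBound_mono (by norm_num)).trans (netBound_eight_le.trans ?_)
    norm_num at hkw
    exact hkw
  · refine (netBound_mono ?_).trans (netBound_twentyFour.trans_le ?_)
    · exact_mod_cast (by omega : 2 * k ≤ 24)
    · have : (5 : ℝ) ≤ k := by exact_mod_cast h5
      linarith

section PerfectMatchingOn

variable {G : SimpleGraph V} {S T : Set V} {M N : Set (Sym2 V)}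

def IsPerfectMatchingOn (G : SimpleGraph V) (S : Set V) (M : Set (Sym2 V)) : Prop :=
  M ⊆ G.edgeSet ∧ (∀ w ∈ S, ∃! e, e ∈ M ∧ w ∈ e) ∧ ∀ e ∈ M, ∀ w ∈ e, w ∈ S

noncomputable def pmCount (G : SimpleGraph V) (S : Set V) : ℕ :=
  {M : Set (Sym2 V) | IsPerfectMatchingOn G S M}.ncard

lemma isPM_iff_isPerfectMatchingOn_univ : IsPM G M ↔ IsPerfectMatchingOn G Set.univ M := by
  simp [IsPM, IsPerfectMatchingOn]

lemma isPerfectMatchingOn_empty (G : SimpleGraph V) : IsPerfectMatchingOn G ∅ ∅ := by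
  simp [IsPerfectMatchingOn]

lemma isPerfectMatchingOn_pair {a b : V} (hab : G.Adj a b) :
    IsPerfectMatchingOn G {a, b} {s(a, b)} := by
  refine ⟨by simpa using hab, ?_, ?_⟩
  · rintro w hw
    exact ⟨s(a, b), ⟨rfl, by rcases hw with rfl | rfl <;> simp⟩, fun e he => he.1⟩
  · rintro e rfl w hw
    simpa using hw

lemma IsPerfectMatchingOn.disjoint (hM : IsPerfectMatchingOn G S M)
    (hN : IsPerfectMatchingOn G T N) (hST : Disjoint S T) : Disjoint M N :=
  Set.disjoint_left.mpr fun e heM heN =>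
    hST.notMem_of_mem_left (hM.2.2 e heM _ e.out_fst_mem) (hN.2.2 e heN _ e.out_fst_mem)

lemma IsPerfectMatchingOn.union (hM : IsPerfectMatchingOn G S M)
    (hN : IsPerfectMatchingOn G T N) (hST : Disjoint S T) :
    IsPerfectMatchingOn G (S ∪ T) (M ∪ N) := by
  refine ⟨Set.union_subset hM.1 hN.1, ?_, ?_⟩
  · rintro w (hw | hw)
    · obtain ⟨e, he, huniq⟩ := hM.2.1 w hw
      refine ⟨e, ⟨Or.inl he.1, he.2⟩, ?_⟩
      rintro e' ⟨he' | he', hwe'⟩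
      · exact huniq e' ⟨he', hwe'⟩
      · exact absurd (hN.2.2 e' he' w hwe') (hST.notMem_of_mem_left hw)
    · obtain ⟨e, he, huniq⟩ := hN.2.1 w hw
      refine ⟨e, ⟨Or.inr he.1, he.2⟩, ?_⟩
      rintro e' ⟨he' | he', hwe'⟩
      · exact absurd (hM.2.2 e' he' w hwe') (hST.notMem_of_mem_right hw)
      · exact huniq e' ⟨he', hwe'⟩
  · rintro e (he | he) w hw
    · exact Or.inl (hM.2.2 e he w hw)
    · exact Or.inr (hN.2.2 e he w hw)

lemma ncard_image_union_isPerfectMatchingOn (hN : IsPerfectMatchingOn G T N)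
    (hST : Disjoint S T) :
    ((· ∪ N) '' {M | IsPerfectMatchingOn G S M}).ncard = pmCount G S :=
  Set.InjOn.ncard_image fun M hM M' hM' h => by
    rw [← Set.union_sdiff_cancel_right (Set.disjoint_iff.mp (hM.disjoint hN hST)), h,
      Set.union_sdiff_cancel_right (Set.disjoint_iff.mp (IsPerfectMatchingOn.disjoint hM' hN hST))]

lemma image_union_subset_isPerfectMatchingOn (hN : IsPerfectMatchingOn G T N)
    (hST : Disjoint S T) :
    (· ∪ N) '' {M | IsPerfectMatchingOn G S M} ⊆ {M | IsPerfectMatchingOn G (S ∪ T) M} := by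
  rintro _ ⟨M, hM, rfl⟩
  exact IsPerfectMatchingOn.union hM hN hST

end PerfectMatchingOn

section Counting

variable [Finite V] {G : SimpleGraph V} {S T : Set V} {N : Set (Sym2 V)}

lemma one_le_pmCount_pair {a b : V} (hab : G.Adj a b) : 1 ≤ pmCount G {a, b} :=
  (Set.ncard_pos (Set.toFinite _)).mpr ⟨_, isPerfectMatchingOn_pair hab⟩

lemma pmCount_empty (G : SimpleGraph V) : 1 ≤ pmCount G ∅ :=
  (Set.ncard_pos (Set.toFinite _)).mpr ⟨_, isPerfectMatchingOn_empty G⟩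

lemma pmCount_mul_le (hST : Disjoint S T) : pmCount G S * pmCount G T ≤ pmCount G (S ∪ T) := by
  have cancel : ∀ {X Y : Set V} {M N M' N'}, IsPerfectMatchingOn G X M →
      IsPerfectMatchingOn G Y N' → Disjoint X Y → M ∪ N = M' ∪ N' → M ⊆ M' :=
    fun hM hN' hXY h =>
      Disjoint.subset_left_of_subset_union (h ▸ Set.subset_union_left) (hM.disjoint hN' hXY)
  rw [pmCount, pmCount, ← Set.ncard_prod]
  refine Set.ncard_le_ncard_of_injOn (fun p => p.1 ∪ p.2)
    (fun p hp => hp.1.union hp.2 hST) ?_ (Set.toFinite _)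
  rintro ⟨M, N⟩ ⟨hM, hN⟩ ⟨M', N'⟩ ⟨hM', hN'⟩ h
  have h' : N ∪ M = N' ∪ M' := by simpa [Set.union_comm] using h
  exact Prod.ext ((cancel hM hN' hST h).antisymm (cancel hM' hN hST h.symm))
    ((cancel hN hM' hST.symm h').antisymm (cancel hN' hM hST.symm h'.symm))

lemma pmCount_le_union_pair {a b : V} (hab : G.Adj a b) (ha : a ∉ S) (hb : b ∉ S) :
    pmCount G S ≤ pmCount G (S ∪ {a, b}) :=
  calc pmCount G S ≤ pmCount G S * pmCount G {a, b} :=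
        Nat.le_mul_of_pos_right _ (one_le_pmCount_pair hab)
    _ ≤ pmCount G (S ∪ {a, b}) := pmCount_mul_le (by simp [ha, hb])

/-- The perfect matchings of `S ∪ {v, v'}` through `vv'` and those through `uv` and `u'v'` are
disjoint families, in bijection with the perfect matchings of `S` and of `S \ {u, u'}`. -/
lemma pmCount_add_le {u u' v v' : V} (hu : u ∈ S) (hu' : u' ∈ S) (huu' : u ≠ u')
    (hv : v ∉ S) (hv' : v' ∉ S) (hvv' : G.Adj v v') (huv : G.Adj u v) (hu'v' : G.Adj u' v') :
    pmCount G S + pmCount G (S \ {u, u'}) ≤ pmCount G (S ∪ {v, v'}) := by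
  have hvv'ne := hvv'.ne
  have hE : IsPerfectMatchingOn G {v, v'} {s(v, v')} := isPerfectMatchingOn_pair hvv'
  have hSE : Disjoint S {v, v'} := by simp [hv, hv']
  have hN := (isPerfectMatchingOn_pair huv).union (isPerfectMatchingOn_pair hu'v')
    (by rw [Set.disjoint_left]; grind)
  have hdisj : Disjoint (S \ {u, u'}) ({u, v} ∪ {u', v'}) := by rw [Set.disjoint_left]; grind
  have hset : S \ {u, u'} ∪ ({u, v} ∪ {u', v'}) = S ∪ {v, v'} := by ext; grind
  set A := (· ∪ {s(v, v')}) '' {M | IsPerfectMatchingOn G S M}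
  set B := (· ∪ ({s(u, v)} ∪ {s(u', v')})) '' {M | IsPerfectMatchingOn G (S \ {u, u'}) M}
  have hAB : Disjoint A B := by
    rw [Set.disjoint_left]
    rintro _ ⟨M, -, rfl⟩ ⟨N, hN, hMN⟩
    simp only at hMN
    have : s(v, v') ∈ N ∪ ({s(u, v)} ∪ {s(u', v')}) := by rw [hMN]; exact Or.inr rfl
    rcases this with h | h | h
    · exact hv (hN.2.2 _ h v (Sym2.mem_mk_left _ _)).1
    · grind
    · grind
  calc pmCount G S + pmCount G (S \ {u, u'}) = A.ncard + B.ncard := by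
        rw [ncard_image_union_isPerfectMatchingOn hE hSE,
          ncard_image_union_isPerfectMatchingOn hN hdisj]
    _ = (A ∪ B).ncard := (Set.ncard_union_eq hAB).symm
    _ ≤ pmCount G (S ∪ {v, v'}) := by
        refine Set.ncard_le_ncard (Set.union_subset ?_ ?_) (Set.toFinite _)
        · exact image_union_subset_isPerfectMatchingOn hE hSE
        · exact hset ▸ image_union_subset_isPerfectMatchingOn hN hdisj

end Counting

section Invariant

variable {G : SimpleGraph V} {S c : Set V} {T : Finset (Finset V)}

def IsPairFamily (c : Set V) (T : Finset (Finset V)) : Prop :=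
  ∀ P ∈ T, ↑P ⊆ c ∧ P.card = 2

lemma IsPairFamily.card_le_six [Finite V] (hT : IsPairFamily c T) (hc : c.ncard ≤ 4) :
    T.card ≤ 6 := by
  have hfin := Set.toFinite c
  calc T.card ≤ (hfin.toFinset.powersetCard 2).card :=
        Finset.card_le_card fun P hP => Finset.mem_powersetCard.mpr
          ⟨fun x hx => hfin.mem_toFinset.mpr ((hT P hP).1 hx), (hT P hP).2⟩
    _ = hfin.toFinset.card.choose 2 := Finset.card_powersetCard _ _
    _ ≤ Nat.choose 4 2 := Nat.choose_le_choose 2 (by rwa [← Set.ncard_eq_toFinset_card c hfin])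
    _ = 6 := rfl

-- `ν(P) = pmCount G (S \ P)` counts the perfect matchings missing exactly the corners in `P`.
noncomputable def pmWeight (G : SimpleGraph V) (S : Set V) (T : Finset (Finset V)) : ℕ :=
  pmCount G S + ∑ P ∈ T, pmCount G (S \ ↑P)

lemma pmCount_le_pmWeight : pmCount G S ≤ pmWeight G S T := Nat.le_add_right _ _

structure WeightBound (G : SimpleGraph V) (S : Set V) (T : Finset (Finset V)) : Prop where
  of_intersecting : (T : Set (Finset V)).Intersecting →
    netBound (S.ncard + 2 * T.card) ≤ pmWeight G S T
  of_nonempty : T.Nonempty → netBound (S.ncard + 2 * T.card - 2) ≤ pmWeight G S T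
  of_disjoint : ∀ P ∈ T, ∀ Q ∈ T, Disjoint P Q →
    netBound (S.ncard + 2 * T.card) ≤ pmWeight G S T + pmCount G (S \ ↑(P ∪ Q))

structure CornerBound (G : SimpleGraph V) (S c : Set V) : Prop where
  corners_subset : c ⊆ S
  ncard_corners_le : c.ncard ≤ 4
  weightBound : ∀ T, IsPairFamily c T → WeightBound G S T

lemma WeightBound.of_netBound_le (hT : T.card ≤ 6)
    (h : netBound (S.ncard + 12) ≤ pmWeight G S T) : WeightBound G S T := by
  have hT' : (T.card : ℝ) ≤ 6 := by exact_mod_cast hT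
  have hle : ∀ x : ℝ, x ≤ S.ncard + 12 → netBound x ≤ pmWeight G S T :=
    fun x hx => (netBound_mono hx).trans h
  exact ⟨fun _ => hle _ (by linarith), fun _ => hle _ (by linarith),
    fun _ _ _ _ _ => (hle _ (by linarith)).trans (by simp)⟩

lemma CornerBound.netBound_le_pmCount (h : CornerBound G S c) :
    netBound S.ncard ≤ pmCount G S := by
  simpa [pmWeight] using
    (h.weightBound ∅ (by simp [IsPairFamily])).of_intersecting (by simp [Set.Intersecting])

end Invariant

section Multiplication

variable [Finite V] {G : SimpleGraph V}

lemma CornerBound.multiplication {S₁ S₂ c₁ c₂ : Set V} {u u' v v' : V}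
    (h₁ : CornerBound G S₁ c₁) (h₂ : CornerBound G S₂ c₂) (hS : Disjoint S₁ S₂)
    (hu : u ∈ c₁) (hu' : u' ∈ c₁) (huu' : u ≠ u') (hv : v ∈ c₂) (hv' : v' ∈ c₂) (hvv' : v ≠ v') :
    CornerBound G (S₁ ∪ S₂) ((c₁ \ {u, u'}) ∪ (c₂ \ {v, v'})) := by
  have hc₁ : (c₁ \ {u, u'}).ncard ≤ 2 := by
    have := h₁.ncard_corners_le
    rw [Set.ncard_sdiff (by grind) (Set.toFinite _), Set.ncard_pair huu']
    omega
  have hc₂ : (c₂ \ {v, v'}).ncard ≤ 2 := by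
    have := h₂.ncard_corners_le
    rw [Set.ncard_sdiff (by grind) (Set.toFinite _), Set.ncard_pair hvv']
    omega
  have hc : ((c₁ \ {u, u'}) ∪ (c₂ \ {v, v'})).ncard ≤ 4 :=
    (Set.ncard_union_le _ _).trans (by omega)
  refine ⟨Set.union_subset_union (Set.sdiff_subset.trans h₁.corners_subset)
    (Set.sdiff_subset.trans h₂.corners_subset), hc, fun T hT => ?_⟩
  refine WeightBound.of_netBound_le (hT.card_le_six hc) ?_
  calc netBound ((S₁ ∪ S₂).ncard + 12)
      = netBound S₁.ncard * netBound S₂.ncard := by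
        rw [netBound_mul, Set.ncard_union_eq hS]
        push_cast
        ring_nf
    _ ≤ pmCount G S₁ * pmCount G S₂ :=
        mul_le_mul h₁.netBound_le_pmCount h₂.netBound_le_pmCount (netBound_pos _).le
          (Nat.cast_nonneg _)
    _ ≤ pmWeight G (S₁ ∪ S₂) T := by
        exact_mod_cast (pmCount_mul_le hS).trans pmCount_le_pmWeight

end Multiplication

section FourVertices

variable {G : SimpleGraph V} {S : Set V} {T : Finset (Finset V)}

lemma card_le_card_inter_add_sum_pmCount {D : Finset (Finset V)}
    (hsides : ∀ P ∈ T, P ∉ D → 1 ≤ pmCount G (S \ ↑P)) :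
    T.card ≤ (T ∩ D).card + ∑ P ∈ T, pmCount G (S \ ↑P) := by
  rw [← Finset.filter_mem_eq_inter, ← Finset.card_filter_add_card_filter_not (· ∈ D)]
  gcongr
  calc (T.filter (· ∉ D)).card = ∑ P ∈ T.filter (· ∉ D), 1 := Finset.card_eq_sum_ones _
    _ ≤ ∑ P ∈ T.filter (· ∉ D), pmCount G (S \ ↑P) := Finset.sum_le_sum fun P hP =>
        (Finset.mem_filter.mp hP).elim (hsides P)
    _ ≤ ∑ P ∈ T, pmCount G (S \ ↑P) := Finset.sum_le_sum_of_subset (Finset.filter_subset _ _)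

lemma card_inter_pair_le_one {P₀ Q₀ : Finset V} (hint : (T : Set (Finset V)).Intersecting)
    (hPQ₀ : Disjoint P₀ Q₀) : (T ∩ {P₀, Q₀}).card ≤ 1 :=
  Finset.card_le_one.mpr fun P hP Q hQ => by
    obtain ⟨hPT, hPD⟩ := Finset.mem_inter.mp hP
    obtain ⟨hQT, hQD⟩ := Finset.mem_inter.mp hQ
    simp only [Finset.mem_insert, Finset.mem_singleton] at hPD hQD
    rcases hPD with rfl | rfl <;> rcases hQD with rfl | rfl
    exacts [rfl, absurd hPQ₀ (hint hPT hQT), absurd hPQ₀.symm (hint hPT hQT), rfl]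

lemma weightBound_of_ncard_eq_four [Finite V] (hS : S.ncard = 4) (hpm : 2 ≤ pmCount G S)
    (hT : IsPairFamily S T) {P₀ Q₀ : Finset V} (hPQ₀ : Disjoint P₀ Q₀)
    (hsides : ∀ P ∈ T, P ∉ ({P₀, Q₀} : Finset (Finset V)) → 1 ≤ pmCount G (S \ ↑P)) :
    WeightBound G S T := by
  set D : Finset (Finset V) := {P₀, Q₀}
  have hk := hT.card_le_six hS.le
  have hsum := card_le_card_inter_add_sum_pmCount hsides
  have hbad : ((T ∩ D).card : ℝ) ≤ 2 := by
    exact_mod_cast (Finset.card_le_card Finset.inter_subset_right).trans Finset.card_le_two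
  have hbad' : ((T ∩ D).card : ℝ) ≤ T.card := by
    exact_mod_cast Finset.card_le_card Finset.inter_subset_left
  -- only the pairs in `D` may have a complement without perfect matchings
  have hw : 2 + (T.card : ℝ) ≤ (T ∩ D).card + pmWeight G S T := by
    exact_mod_cast (by unfold pmWeight; omega : 2 + T.card ≤ (T ∩ D).card + pmWeight G S T)
  have hn₂ : (S.ncard : ℝ) + 2 * T.card = 2 * (T.card + 2 : ℕ) := by rw [hS]; push_cast; ring
  have hn₁ : (S.ncard : ℝ) + 2 * T.card - 2 = 2 * (T.card + 1 : ℕ) := by rw [hS]; push_cast; ring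
  refine ⟨fun hint => ?_, fun hne => ?_, fun P hP Q hQ hPQ => ?_⟩
  · have hbad1 : ((T ∩ D).card : ℝ) ≤ 1 := by exact_mod_cast card_inter_pair_le_one hint hPQ₀
    rw [hn₂]
    exact netBound_two_mul_le (by omega) (by linarith) (by push_cast; linarith)
  · have hk1 : (1 : ℝ) ≤ T.card := by exact_mod_cast Finset.card_pos.mpr hne
    rw [hn₁]
    exact netBound_two_mul_le (by omega) (by linarith) (by push_cast; linarith)
  · have hPQS : ↑(P ∪ Q) = S := by
      refine Set.eq_of_subset_of_ncard_le ?_ ?_ (Set.toFinite _)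
      · rw [Finset.coe_union]
        exact Set.union_subset (hT P hP).1 (hT Q hQ).1
      · rw [hS, Set.ncard_coe_finset, Finset.card_union_of_disjoint hPQ, (hT P hP).2, (hT Q hQ).2]
    have hempty : (1 : ℝ) ≤ pmCount G (S \ ↑(P ∪ Q)) := by
      rw [hPQS, Set.sdiff_self]
      exact_mod_cast pmCount_empty G
    rw [hn₂]
    exact netBound_two_mul_le (by omega) (by linarith)
      (by rw [Nat.cast_add, Nat.cast_two]; linarith)

end FourVertices

section FourCycle

variable [Finite V] {G : SimpleGraph V} {a b c d : V}

lemma two_le_pmCount_fourCycle (hab : a ≠ b) (hac : a ≠ c) (had : a ≠ d) (hbc : b ≠ c)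
    (hbd : b ≠ d) (hAab : G.Adj a b) (hAbc : G.Adj b c) (hAcd : G.Adj c d) (hAda : G.Adj d a) :
    2 ≤ pmCount G {a, b, c, d} := by
  have := pmCount_add_le (S := {a, b}) (u := b) (u' := a) (v := c) (v' := d) (by simp) (by simp)
    hab.symm (by simp [hac.symm, hbc.symm]) (by simp [had.symm, hbd.symm]) hAcd hAbc hAda.symm
  rw [show ({a, b} : Set V) \ {b, a} = ∅ by ext; grind,
    show ({a, b} : Set V) ∪ {c, d} = {a, b, c, d} by ext; grind] at this
  linarith [one_le_pmCount_pair hAab (G := G), pmCount_empty G]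

lemma one_le_pmCount_of_eq_pair {X : Set V} (hX : X = {a, b}) (hab : G.Adj a b) :
    1 ≤ pmCount G X :=
  hX ▸ one_le_pmCount_pair hab

lemma one_le_pmCount_fourCycle_sdiff (hab : a ≠ b) (hac : a ≠ c) (had : a ≠ d) (hbc : b ≠ c)
    (hbd : b ≠ d) (hcd : c ≠ d) (hAab : G.Adj a b) (hAbc : G.Adj b c) (hAcd : G.Adj c d)
    (hAda : G.Adj d a) {P : Finset V} (hPS : ↑P ⊆ ({a, b, c, d} : Set V)) (hP : P.card = 2)
    (hPD : P ∉ ({{a, c}, {b, d}} : Finset (Finset V))) :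
    1 ≤ pmCount G ({a, b, c, d} \ ↑P) := by
  obtain ⟨x, y, hxy, rfl⟩ := Finset.card_eq_two.mp hP
  simp only [Finset.coe_insert, Finset.coe_singleton, Set.insert_subset_iff,
    Set.singleton_subset_iff, Set.mem_insert_iff, Set.mem_singleton_iff] at hPS
  simp only [Finset.mem_insert, Finset.mem_singleton, not_or] at hPD
  rw [Finset.coe_pair]
  obtain ⟨hx, hy⟩ := hPS
  rcases hx with hx | hx | hx | hx <;> rcases hy with hy | hy | hy | hy <;> subst x y
  all_goals first
    | exact absurd rfl hxy
    | exact absurd rfl hPD.1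
    | exact absurd (Finset.pair_comm _ _) hPD.1
    | exact absurd rfl hPD.2
    | exact absurd (Finset.pair_comm _ _) hPD.2
    | skip
  · exact one_le_pmCount_of_eq_pair (by ext; grind) hAcd
  · exact one_le_pmCount_of_eq_pair (by ext; grind) hAbc
  · exact one_le_pmCount_of_eq_pair (by ext; grind) hAcd
  · exact one_le_pmCount_of_eq_pair (by ext; grind) hAda
  · exact one_le_pmCount_of_eq_pair (by ext; grind) hAda
  · exact one_le_pmCount_of_eq_pair (by ext; grind) hAab
  · exact one_le_pmCount_of_eq_pair (by ext; grind) hAbc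
  · exact one_le_pmCount_of_eq_pair (by ext; grind) hAab

lemma CornerBound.fourCycle (hab : a ≠ b) (hac : a ≠ c) (had : a ≠ d)
    (hbc : b ≠ c) (hbd : b ≠ d) (hcd : c ≠ d)
    (hadj : ∀ x ∈ ({a, b, c, d} : Set V), ∀ y ∈ ({a, b, c, d} : Set V),
      (G.Adj x y ↔ s(x, y) ∈ ({s(a, b), s(b, c), s(c, d), s(d, a)} : Set (Sym2 V)))) :
    CornerBound G {a, b, c, d} {a, b, c, d} := by
  have hAab : G.Adj a b := (hadj a (by simp) b (by simp)).mpr (by simp)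
  have hAbc : G.Adj b c := (hadj b (by simp) c (by simp)).mpr (by simp)
  have hAcd : G.Adj c d := (hadj c (by simp) d (by simp)).mpr (by simp)
  have hAda : G.Adj d a := (hadj d (by simp) a (by simp)).mpr (by simp)
  have hS : ({a, b, c, d} : Set V).ncard = 4 := by
    rw [Set.ncard_insert_of_notMem (by simp [hab, hac, had]),
      Set.ncard_insert_of_notMem (by simp [hbc, hbd]), Set.ncard_pair hcd]
  refine ⟨subset_rfl, hS.le, fun T hT => weightBound_of_ncard_eq_four hS
    (two_le_pmCount_fourCycle hab hac had hbc hbd hAab hAbc hAcd hAda) hT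
    (P₀ := {a, c}) (Q₀ := {b, d}) (by simp [hab.symm, hbc, had.symm, hcd.symm]) fun P hP hPD => ?_⟩
  exact one_le_pmCount_fourCycle_sdiff hab hac had hbc hbd hcd hAab hAbc hAcd hAda
    (hT P hP).1 (hT P hP).2 hPD

end FourCycle

section Incrementation

variable {G : SimpleGraph V} {S c : Set V} {u u' v v' : V}

structure IsIncrementation (G : SimpleGraph V) (S c : Set V) (u u' v v' : V) : Prop where
  corners_subset : c ⊆ S
  left_mem : u ∈ c
  right_mem : u' ∈ c
  left_ne_right : u ≠ u'
  left_not_mem : v ∉ S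
  right_not_mem : v' ∉ S
  adj : G.Adj v v'
  adj_left : G.Adj u v
  adj_right : G.Adj u' v'

lemma IsIncrementation.swap (h : IsIncrementation G S c u u' v v') :
    IsIncrementation G S c u' u v' v :=
  ⟨h.corners_subset, h.right_mem, h.left_mem, h.left_ne_right.symm, h.right_not_mem,
    h.left_not_mem, h.adj.symm, h.adj_right, h.adj_left⟩

-- A pair `{x, v}` of new corners is traded for `{x, u'}`: adding `u'v'` to a matching that misses
-- `x` and `u'` gives one that misses `x` and `v`.
noncomputable def transfer (u u' v v' : V) (z : V) : V :=
  if z = v then u' else if z = v' then u else z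

lemma transfer_swap (hvv' : v ≠ v') : transfer u' u v' v = transfer u u' v v' := by
  ext z
  unfold transfer
  grind

lemma transfer_of_ne {z : V} (hv : z ≠ v) (hv' : z ≠ v') : transfer u u' v v' z = z := by
  simp [transfer, hv, hv']

lemma IsIncrementation.mapsTo_transfer (h : IsIncrementation G S c u u' v v') :
    Set.MapsTo (transfer u u' v v') ((c \ {u, u'}) ∪ {v, v'}) c := by
  have := h.left_mem; have := h.right_mem
  intro z hz
  unfold transfer
  grind

lemma IsIncrementation.injOn_transfer (h : IsIncrementation G S c u u' v v') :
    Set.InjOn (transfer u u' v v') ((c \ {u, u'}) ∪ {v, v'}) := by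
  have := h.corners_subset; have := h.left_not_mem; have := h.right_not_mem; have := h.adj.ne
  have := h.left_ne_right
  intro z hz w hw
  unfold transfer
  grind

noncomputable def transferFamily (u u' v v' : V) (T : Finset (Finset V)) : Finset (Finset V) :=
  insert {u, u'} (T.image (Finset.image (transfer u u' v v')))

lemma image_transfer_of_disjoint {P : Finset V} (hP : Disjoint P {v, v'}) :
    P.image (transfer u u' v v') = P := by
  rw [Finset.image_congr (g := id), Finset.image_id]
  intro z hz
  have hz' : z ∉ ({v, v'} : Finset V) := Finset.disjoint_left.mp hP hz
  simp only [Finset.mem_insert, Finset.mem_singleton, not_or] at hz'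
  exact transfer_of_ne hz'.1 hz'.2

lemma not_disjoint_image_transfer {P : Finset V} (hvv' : v ≠ v') (hP : ¬Disjoint P {v, v'}) :
    ¬Disjoint (P.image (transfer u u' v v')) {u, u'} := by
  obtain ⟨z, hzP, hz⟩ := Finset.not_disjoint_iff.mp hP
  refine Finset.not_disjoint_iff.mpr ⟨_, Finset.mem_image_of_mem _ hzP, ?_⟩
  simp only [Finset.mem_insert, Finset.mem_singleton] at hz
  rcases hz with rfl | rfl <;> simp [transfer, hvv'.symm]

lemma IsIncrementation.image_transfer_injOn (h : IsIncrementation G S c u u' v v') :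
    Set.InjOn (Finset.image (transfer u u' v v')) {P | ↑P ⊆ (c \ {u, u'}) ∪ {v, v'}} :=
  fun P hP Q hQ hPQ => Finset.coe_injective <| (h.injOn_transfer.image_eq_image_iff hP hQ).mp <| by
    simpa only [Finset.coe_image] using congrArg (fun X : Finset V => (X : Set V)) hPQ

lemma IsIncrementation.isPairFamily_transferFamily (h : IsIncrementation G S c u u' v v')
    {T : Finset (Finset V)} (hT : IsPairFamily ((c \ {u, u'}) ∪ {v, v'}) T) :
    IsPairFamily c (transferFamily u u' v v' T) := by
  intro P hP
  rcases Finset.mem_insert.mp hP with rfl | hP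
  · exact ⟨by simp [Set.insert_subset_iff, h.left_mem, h.right_mem],
      Finset.card_pair h.left_ne_right⟩
  obtain ⟨Q, hQ, rfl⟩ := Finset.mem_image.mp hP
  refine ⟨?_, ?_⟩
  · rw [Finset.coe_image]
    exact (h.mapsTo_transfer.mono_left (hT Q hQ).1).image_subset
  · rw [Finset.card_image_of_injOn (h.injOn_transfer.mono (hT Q hQ).1), (hT Q hQ).2]

lemma IsIncrementation.pair_not_mem_image_transfer (h : IsIncrementation G S c u u' v v')
    {T : Finset (Finset V)} (hT : IsPairFamily ((c \ {u, u'}) ∪ {v, v'}) T) (hvv' : {v, v'} ∉ T) :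
    {u, u'} ∉ T.image (Finset.image (transfer u u' v v')) := by
  intro hmem
  obtain ⟨P, hP, hPeq⟩ := Finset.mem_image.mp hmem
  have himage : ({v, v'} : Finset V).image (transfer u u' v v') = {u, u'} := by
    simp [transfer, h.adj.ne.symm, Finset.pair_comm]
  refine hvv' (h.image_transfer_injOn (hT P hP).1 ?_ (hPeq.trans himage.symm) ▸ hP)
  change (({v, v'} : Finset V) : Set V) ⊆ _
  rw [Finset.coe_pair]
  exact Set.subset_union_right

lemma IsIncrementation.card_transferFamily (h : IsIncrementation G S c u u' v v')
    {T : Finset (Finset V)} (hT : IsPairFamily ((c \ {u, u'}) ∪ {v, v'}) T)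
    (hvv' : {v, v'} ∉ T) : (transferFamily u u' v v' T).card = T.card + 1 := by
  rw [transferFamily, Finset.card_insert_of_notMem (h.pair_not_mem_image_transfer hT hvv'),
    Finset.card_image_of_injOn fun P hP Q hQ => h.image_transfer_injOn (hT P hP).1 (hT Q hQ).1]

lemma intersecting_transferFamily (hvv' : v ≠ v') {T : Finset (Finset V)}
    (hint : (T : Set (Finset V)).Intersecting) (hmeet : ∀ P ∈ T, ¬Disjoint P {v, v'}) :
    (transferFamily u u' v v' T : Set (Finset V)).Intersecting := by
  rw [transferFamily, Finset.coe_insert, Set.intersecting_insert, Finset.coe_image]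
  refine ⟨?_, by simp, ?_⟩
  · rintro _ ⟨P, hP, rfl⟩ _ ⟨Q, hQ, rfl⟩
    obtain ⟨z, hzP, hzQ⟩ := Finset.not_disjoint_iff.mp (hint hP hQ)
    exact Finset.not_disjoint_iff.mpr
      ⟨_, Finset.mem_image_of_mem _ hzP, Finset.mem_image_of_mem _ hzQ⟩
  · rintro _ ⟨P, hP, rfl⟩
    exact fun hdisj => not_disjoint_image_transfer hvv' (hmeet P hP) hdisj.symm

lemma not_mem_transferFamily (hvv' : v ≠ v') {T : Finset (Finset V)} {R : Finset V}
    (hR : R.Nonempty) (hRT : R ∉ T) (hRu : Disjoint R {u, u'}) :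
    R ∉ transferFamily u u' v v' T := by
  rintro hmem
  rcases Finset.mem_insert.mp hmem with rfl | hmem
  · exact hR.ne_empty (Finset.disjoint_self_iff_empty _ |>.mp hRu)
  obtain ⟨P, hP, rfl⟩ := Finset.mem_image.mp hmem
  by_cases hPv : Disjoint P {v, v'}
  · exact hRT (by rwa [image_transfer_of_disjoint hPv])
  · exact not_disjoint_image_transfer hvv' hPv hRu

lemma IsIncrementation.disjoint_of_subset_corners (h : IsIncrementation G S c u u' v v')
    {R : Finset V} (hR : ↑R ⊆ (c \ {u, u'}) ∪ {v, v'}) (hRv : Disjoint R {v, v'}) :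
    Disjoint R {u, u'} := by
  have := h.corners_subset; have := h.left_mem; have := h.right_mem
  have := h.left_not_mem; have := h.right_not_mem
  rw [Finset.disjoint_left] at hRv ⊢
  intro z hz
  have := hR hz
  simp only [Finset.mem_insert, Finset.mem_singleton] at hRv ⊢
  grind

lemma pair_subset_union_of_not_disjoint {P Q : Finset V} (hPQ : Disjoint P Q)
    (hP : ¬Disjoint P {v, v'}) (hQ : ¬Disjoint Q {v, v'}) : ({v, v'} : Finset V) ⊆ P ∪ Q := by
  obtain ⟨z, hzP, hz⟩ := Finset.not_disjoint_iff.mp hP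
  obtain ⟨w, hwQ, hw⟩ := Finset.not_disjoint_iff.mp hQ
  have hzw : z ≠ w := fun hzw => Finset.disjoint_left.mp hPQ hzP (hzw ▸ hwQ)
  simp only [Finset.mem_insert, Finset.mem_singleton] at hz hw
  intro x hx
  simp only [Finset.mem_insert, Finset.mem_singleton] at hx
  grind

lemma sdiff_coe_sdiff_pair {X : Finset V} (hv : v ∉ S) (hv' : v' ∉ S)
    (hX : ({v, v'} : Finset V) ⊆ X) : S \ ↑(X \ {v, v'}) = (S ∪ {v, v'}) \ ↑X := by
  have hvX : v ∈ X := hX (by simp)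
  have hv'X : v' ∈ X := hX (by simp)
  ext
  simp only [Finset.coe_sdiff, Finset.coe_pair]
  grind

end Incrementation

section IncrementationCount

variable [Finite V] {G : SimpleGraph V} {S c : Set V} {u u' v v' : V}

lemma IsIncrementation.pmCount_sdiff_image_transfer_le (h : IsIncrementation G S c u u' v v')
    {P : Finset V} (hP : ↑P ⊆ (c \ {u, u'}) ∪ {v, v'}) (hvP : v ∈ P) (hv'P : v' ∉ P) :
    pmCount G (S \ ↑(P.image (transfer u u' v v'))) ≤ pmCount G ((S ∪ {v, v'}) \ ↑P) := by
  have hset : (S \ ↑(P.image (transfer u u' v v'))) ∪ {u', v'} = (S ∪ {v, v'}) \ ↑P := by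
    have := h.corners_subset; have := h.left_not_mem; have := h.right_not_mem
    have := h.right_mem; have hP' := fun z (hz : z ∈ P) => hP hz
    ext z
    simp only [Finset.coe_image, Set.mem_union, Set.mem_sdiff, Set.mem_image, Finset.mem_coe,
      Set.mem_insert_iff, Set.mem_singleton_iff] at hP' ⊢
    unfold transfer
    grind
  refine hset ▸ pmCount_le_union_pair h.adj_right (fun hu' => hu'.2 ?_)
    (fun hv' => h.right_not_mem hv'.1)
  exact Finset.mem_image.mpr ⟨v, hvP, by simp [transfer]⟩

lemma IsIncrementation.pmCount_add_le_of_disjoint (h : IsIncrementation G S c u u' v v')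
    {P : Finset V} (hP : ↑P ⊆ (c \ {u, u'}) ∪ {v, v'}) (hPv : Disjoint P {v, v'}) :
    pmCount G (S \ ↑P) + pmCount G (S \ ↑(P ∪ {u, u'})) ≤ pmCount G ((S ∪ {v, v'}) \ ↑P) := by
  have hPu := Finset.disjoint_left.mp (h.disjoint_of_subset_corners hP hPv)
  have hu : u ∈ S \ ↑P := ⟨h.corners_subset h.left_mem, fun huP => hPu huP (by simp)⟩
  have hu' : u' ∈ S \ ↑P := ⟨h.corners_subset h.right_mem, fun huP => hPu huP (by simp)⟩
  have := pmCount_add_le (G := G) hu hu' h.left_ne_right (fun hv => h.left_not_mem hv.1)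
    (fun hv' => h.right_not_mem hv'.1) h.adj h.adj_left h.adj_right
  have hvP : Disjoint ({v, v'} : Set V) ↑P := by
    rw [← Finset.coe_pair, Finset.disjoint_coe]
    exact hPv.symm
  rw [Set.sdiff_sdiff] at this
  rwa [Finset.coe_union, Finset.coe_pair, Set.union_sdiff_distrib, hvP.sdiff_eq_left]

lemma IsIncrementation.pmCount_transfer_add_le (h : IsIncrementation G S c u u' v v')
    {P : Finset V} (hP : ↑P ⊆ (c \ {u, u'}) ∪ {v, v'}) (hP2 : P.card = 2) (hPv : P ≠ {v, v'}) :
    pmCount G (S \ ↑(P.image (transfer u u' v v'))) +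
        (if Disjoint P {v, v'} then pmCount G (S \ ↑(P ∪ {u, u'})) else 0) ≤
      pmCount G ((S ∪ {v, v'}) \ ↑P) := by
  by_cases hdisj : Disjoint P {v, v'}
  · rw [if_pos hdisj, image_transfer_of_disjoint hdisj]
    exact h.pmCount_add_le_of_disjoint hP hdisj
  rw [if_neg hdisj, add_zero]
  have hboth : ¬(v ∈ P ∧ v' ∈ P) := fun hvv' => hPv <|
    (Finset.eq_of_subset_of_card_le (by simp [Finset.insert_subset_iff, hvv'])
      (by rw [hP2, Finset.card_pair h.adj.ne])).symm
  obtain ⟨z, hzP, hz⟩ := Finset.not_disjoint_iff.mp hdisj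
  simp only [Finset.mem_insert, Finset.mem_singleton] at hz
  rcases hz with hz | hz <;> subst z
  · exact h.pmCount_sdiff_image_transfer_le hP hzP fun hv' => hboth ⟨hzP, hv'⟩
  · have := h.swap.pmCount_sdiff_image_transfer_le (by rwa [Set.pair_comm u', Set.pair_comm v'])
      hzP fun hv => hboth ⟨hv, hzP⟩
    rwa [transfer_swap h.adj.ne, Set.pair_comm v'] at this

lemma IsIncrementation.pmWeight_transferFamily_add_le (h : IsIncrementation G S c u u' v v')
    {T : Finset (Finset V)} (hT : IsPairFamily ((c \ {u, u'}) ∪ {v, v'}) T) (hvv' : {v, v'} ∉ T) :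
    pmWeight G S (transferFamily u u' v v' T) +
        ∑ R ∈ T.filter (Disjoint · {v, v'}), pmCount G (S \ ↑(R ∪ {u, u'})) ≤
      pmWeight G (S ∪ {v, v'}) T := by
  have hcount := pmCount_add_le (G := G) (h.corners_subset h.left_mem)
    (h.corners_subset h.right_mem) h.left_ne_right h.left_not_mem h.right_not_mem h.adj
    h.adj_left h.adj_right
  have hpairs := Finset.sum_le_sum fun P hP =>
    h.pmCount_transfer_add_le (G := G) (hT P hP).1 (hT P hP).2 (ne_of_mem_of_not_mem hP hvv')
  rw [Finset.sum_add_distrib, ← Finset.sum_filter] at hpairs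
  rw [pmWeight, pmWeight, transferFamily, Finset.sum_insert (h.pair_not_mem_image_transfer hT hvv'),
    Finset.sum_image fun P hP Q hQ => h.image_transfer_injOn (hT P hP).1 (hT Q hQ).1,
    Finset.coe_pair]
  omega

end IncrementationCount

section IncrementationBound

variable [Finite V] {G : SimpleGraph V} {S c : Set V} {u u' v v' : V} {T : Finset (Finset V)}

lemma IsIncrementation.ncard_union (h : IsIncrementation G S c u u' v v') :
    ((S ∪ {v, v'}).ncard : ℝ) = S.ncard + 2 := by
  rw [Set.ncard_union_eq (by simp [h.left_not_mem, h.right_not_mem]), Set.ncard_pair h.adj.ne]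
  push_cast
  ring

lemma IsIncrementation.ncard_corners_le (h : IsIncrementation G S c u u' v v') (hc : c.ncard ≤ 4) :
    ((c \ {u, u'}) ∪ {v, v'}).ncard ≤ 4 := by
  have : (c \ {u, u'}).ncard ≤ 2 := by
    rw [Set.ncard_sdiff (by simp [Set.insert_subset_iff, h.left_mem, h.right_mem]),
      Set.ncard_pair h.left_ne_right]
    omega
  exact (Set.ncard_union_le _ _).trans (by rw [Set.ncard_pair h.adj.ne]; omega)

lemma CornerBound.weightBound_of_pair_mem (hS : CornerBound G S c)
    (h : IsIncrementation G S c u u' v v') (hT : T.card ≤ 6) (hvv' : {v, v'} ∈ T) :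
    WeightBound G (S ∪ {v, v'}) T := by
  refine WeightBound.of_netBound_le hT ?_
  have hS' : (S ∪ {v, v'}) \ ↑({v, v'} : Finset V) = S := by
    have := h.left_not_mem; have := h.right_not_mem
    ext; simp only [Set.mem_sdiff, Set.mem_union, Finset.coe_pair]; grind
  have hpm : pmCount G S ≤ pmCount G (S ∪ {v, v'}) :=
    pmCount_le_union_pair h.adj h.left_not_mem h.right_not_mem
  have hterm : pmCount G S ≤ ∑ P ∈ T, pmCount G ((S ∪ {v, v'}) \ ↑P) := by
    have := Finset.single_le_sum (f := fun P : Finset V => pmCount G ((S ∪ {v, v'}) \ ↑P))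
      (fun _ _ => Nat.zero_le _) hvv'
    rwa [hS'] at this
  calc netBound ((S ∪ {v, v'}).ncard + 12) ≤ netBound (S.ncard + 18) :=
        netBound_mono (by rw [h.ncard_union]; linarith)
    _ = 2 * netBound S.ncard := netBound_add_eighteen _
    _ ≤ 2 * pmCount G S := by linarith [hS.netBound_le_pmCount]
    _ ≤ pmWeight G (S ∪ {v, v'}) T := by
        rw [pmWeight]
        exact_mod_cast (by omega : 2 * pmCount G S ≤ _)

-- The old bound for the disjoint pairs `{u, u'}` and `R` pays for the two new vertices, since
-- `ν'(R) ≥ ν(R) + ν(R ∪ {u, u'})`.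
lemma CornerBound.netBound_le_of_disjoint_mem (hS : CornerBound G S c)
    (h : IsIncrementation G S c u u' v v') (hT : IsPairFamily ((c \ {u, u'}) ∪ {v, v'}) T)
    (hvv' : {v, v'} ∉ T) {R : Finset V} (hR : R ∈ T) (hRv : Disjoint R {v, v'}) :
    netBound ((S ∪ {v, v'}).ncard + 2 * T.card) ≤ pmWeight G (S ∪ {v, v'}) T := by
  have hRT : R ∈ transferFamily u u' v v' T := Finset.mem_insert_of_mem <|
    Finset.mem_image.mpr ⟨R, hR, image_transfer_of_disjoint hRv⟩
  have hbound := (hS.weightBound _ (h.isPairFamily_transferFamily hT)).of_disjoint _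
    (Finset.mem_insert_self _ _) R hRT (h.disjoint_of_subset_corners (hT R hR).1 hRv).symm
  have hweight := h.pmWeight_transferFamily_add_le (G := G) hT hvv'
  have hR' : pmCount G (S \ ↑(R ∪ {u, u'})) ≤
      ∑ R ∈ T.filter (Disjoint · {v, v'}), pmCount G (S \ ↑(R ∪ {u, u'})) :=
    Finset.single_le_sum (f := fun R : Finset V => pmCount G (S \ ↑(R ∪ {u, u'})))
      (fun _ _ => Nat.zero_le _) (Finset.mem_filter.mpr ⟨hR, hRv⟩)
  rw [h.card_transferFamily hT hvv', Finset.union_comm] at hbound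
  calc netBound ((S ∪ {v, v'}).ncard + 2 * T.card)
      = netBound (S.ncard + 2 * (T.card + 1 : ℕ)) := by rw [h.ncard_union]; push_cast; ring_nf
    _ ≤ _ := hbound
    _ ≤ pmWeight G (S ∪ {v, v'}) T := by exact_mod_cast (by omega)

-- Here `P ∪ Q = R ∪ {v, v'}` for a pair `R` of old corners, and `ν'(P ∪ Q) = ν(R)`: the old bound
-- for the nonempty family `insert R (transferFamily u u' v v' T)` applies.
lemma CornerBound.netBound_le_of_disjoint_of_meet (hS : CornerBound G S c)
    (h : IsIncrementation G S c u u' v v') (hT : IsPairFamily ((c \ {u, u'}) ∪ {v, v'}) T)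
    (hvv' : {v, v'} ∉ T) (hmeet : ∀ R ∈ T, ¬Disjoint R {v, v'}) {P Q : Finset V} (hP : P ∈ T)
    (hQ : Q ∈ T) (hPQ : Disjoint P Q) :
    netBound ((S ∪ {v, v'}).ncard + 2 * T.card) ≤
      pmWeight G (S ∪ {v, v'}) T + pmCount G ((S ∪ {v, v'}) \ ↑(P ∪ Q)) := by
  have hsub := pair_subset_union_of_not_disjoint hPQ (hmeet P hP) (hmeet Q hQ)
  set R := (P ∪ Q) \ {v, v'}
  have hRcard : R.card = 2 := by
    rw [Finset.card_sdiff_of_subset hsub, Finset.card_union_of_disjoint hPQ, (hT P hP).2,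
      (hT Q hQ).2, Finset.card_pair h.adj.ne]
  have hRc : ↑R ⊆ (c \ {u, u'}) ∪ {v, v'} := by
    rw [Finset.coe_sdiff, Finset.coe_union]
    exact Set.sdiff_subset.trans (Set.union_subset (hT P hP).1 (hT Q hQ).1)
  have hRv : Disjoint R {v, v'} := Finset.sdiff_disjoint
  have hRT : R ∉ transferFamily u u' v v' T :=
    not_mem_transferFamily h.adj.ne (Finset.card_pos.mp (by omega))
      (fun hR => hmeet R hR hRv) (h.disjoint_of_subset_corners hRc hRv)
  have hfamily : IsPairFamily c (insert R (transferFamily u u' v v' T)) := by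
    intro A hA
    rcases Finset.mem_insert.mp hA with rfl | hA
    · refine ⟨fun z hz => ?_, hRcard⟩
      have hzv : z ∉ ({v, v'} : Set V) := by
        simpa using Finset.disjoint_left.mp hRv hz
      exact ((hRc hz).resolve_right hzv).1
    · exact h.isPairFamily_transferFamily hT A hA
  have hbound := (hS.weightBound _ hfamily).of_nonempty ⟨R, Finset.mem_insert_self _ _⟩
  have hweight := h.pmWeight_transferFamily_add_le (G := G) hT hvv'
  have hinsert : pmWeight G S (insert R (transferFamily u u' v v' T)) =
      pmWeight G S (transferFamily u u' v v' T) + pmCount G (S \ ↑R) := by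
    rw [pmWeight, pmWeight, Finset.sum_insert hRT]
    ring
  rw [Finset.card_insert_of_notMem hRT, h.card_transferFamily hT hvv', hinsert,
    sdiff_coe_sdiff_pair h.left_not_mem h.right_not_mem hsub] at hbound
  calc netBound ((S ∪ {v, v'}).ncard + 2 * T.card)
      = netBound (S.ncard + 2 * (T.card + 1 + 1 : ℕ) - 2) := by
        rw [h.ncard_union]; push_cast; ring_nf
    _ ≤ _ := hbound
    _ ≤ _ := by exact_mod_cast (by omega)

end IncrementationBound

section Main

variable [Finite V] {G : SimpleGraph V}

lemma CornerBound.incrementation {S c : Set V} {u u' v v' : V} (hS : CornerBound G S c)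
    (h : IsIncrementation G S c u u' v v') :
    CornerBound G (S ∪ {v, v'}) ((c \ {u, u'}) ∪ {v, v'}) := by
  have hc := h.ncard_corners_le hS.ncard_corners_le
  refine ⟨Set.union_subset_union_left _ (Set.sdiff_subset.trans hS.corners_subset), hc,
    fun T hT => ?_⟩
  by_cases hvv' : {v, v'} ∈ T
  · exact hS.weightBound_of_pair_mem h (hT.card_le_six hc) hvv'
  have hbound := hS.weightBound _ (h.isPairFamily_transferFamily hT)
  have hweight : pmWeight G S (transferFamily u u' v v' T) ≤ pmWeight G (S ∪ {v, v'}) T :=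
    le_of_add_le_left (h.pmWeight_transferFamily_add_le hT hvv')
  have hn : ((S ∪ {v, v'}).ncard : ℝ) + 2 * T.card =
      S.ncard + 2 * (transferFamily u u' v v' T).card := by
    rw [h.ncard_union, h.card_transferFamily hT hvv']
    push_cast
    ring
  have hnonempty : T.Nonempty → netBound ((S ∪ {v, v'}).ncard + 2 * T.card - 2) ≤
      pmWeight G (S ∪ {v, v'}) T := fun _ => by
    rw [hn]
    exact (hbound.of_nonempty ⟨_, Finset.mem_insert_self _ _⟩).trans (by exact_mod_cast hweight)
  by_cases hdisj : ∃ R ∈ T, Disjoint R {v, v'}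
  · obtain ⟨R, hR, hRv⟩ := hdisj
    have key := hS.netBound_le_of_disjoint_mem h hT hvv' hR hRv
    exact ⟨fun _ => key, hnonempty,
      fun _ _ _ _ _ => key.trans (le_add_of_nonneg_right (Nat.cast_nonneg _))⟩
  push Not at hdisj
  refine ⟨fun hint => ?_, hnonempty,
    fun P hP Q hQ hPQ => hS.netBound_le_of_disjoint_of_meet h hT hvv' hdisj hP hQ hPQ⟩
  rw [hn]
  exact (hbound.of_intersecting (intersecting_transferFamily h.adj.ne hint hdisj)).trans
    (by exact_mod_cast hweight)

lemma IsTwistedNet.cornerBound {S c : Set V} (h : IsTwistedNet G S c) : CornerBound G S c := by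
  induction h with
  | cyc4 a b c d hab hac had hbc hbd hcd hadj =>
    exact CornerBound.fourCycle hab hac had hbc hbd hcd hadj
  | incr S c u u' v v' _ hu hu' huu' hv hv' _ hvv' huv hu'v' _ ih =>
    exact ih.incrementation ⟨ih.corners_subset, hu, hu', huu', hv, hv', hvv', huv, hu'v'⟩
  | mult S₁ c₁ S₂ c₂ u u' v v' _ _ hdisj hu hu' huu' hv hv' hvv' _ _ _ ih₁ ih₂ =>
    exact ih₁.multiplication ih₂ (Set.disjoint_iff_inter_eq_empty.mpr hdisj) hu hu' huu' hv hv'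
      hvv'

end Main

/-- Every twisted net with `n` vertices has at least `2^(n/18 + 2/3)` perfect matchings. -/
theorem twisted_net_many_perfect_matchings
    [Fintype V] (G : SimpleGraph V) (c : Set V)
    (h : IsTwistedNet G Set.univ c) :
    (2 : ℝ) ^ ((Fintype.card V : ℝ) / 18 + 2 / 3) ≤
      ({M : Set (Sym2 V) | IsPM G M}.ncard : ℝ) := by
  have hbound := h.cornerBound.netBound_le_pmCount
  rw [Set.ncard_univ, Nat.card_eq_fintype_card] at hbound
  simp_rw [isPM_iff_isPerfectMatchingOn_univ]
  calc (2 : ℝ) ^ ((Fintype.card V : ℝ) / 18 + 2 / 3) = netBound (Fintype.card V) := by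
        rw [netBound]; ring_nf
    _ ≤ _ := hbound
end
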